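/- arXiv:2505.07074 — 4 statements merged into one kernel-verified Lean document; each statement's English description precedes it below -/
import Mathlib

section
/- Let p and q be coprime positive integers with p < q < 2p. Then no mass μ on ℝ² admits a (q,p)-spiral equicovering. -/
open MeasureTheory

noncomputable section

/-- An affine line in the plane. -/
def IsAffineLine (L : Set (ℝ × ℝ)) : Prop :=
  ∃ a b : ℝ × ℝ, b ≠ 0 ∧ L = {x | ∃ t : ℝ, x = a + t • b}

/-- A mass: a Borel probability measure on the plane giving measure zero to every line. -/
def IsMass (μ : Measure (ℝ × ℝ)) : Prop :=
  IsProbabilityMeasure μ ∧ ∀ L : Set (ℝ × ℝ), IsAffineLine L → μ L = 0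

/-- The wedge with apex `O` spanned by angles in `[α, β]`. -/
def Wedge (O : ℝ × ℝ) (α β : ℝ) : Set (ℝ × ℝ) :=
  {O} ∪ {x | ∃ r : ℝ, 0 < r ∧ ∃ θ ∈ Set.Icc α β, x = O + r • (Real.cos θ, Real.sin θ)}

/-- A `(q,p)`-spiral equicovering of the measure `μ`: a point `O` and a weakly increasing
sequence of angles `θ : ℤ → ℝ` with `θ (j+q) = θ j + 2π`, such that every `p`-wedge
`W(O, θ i, θ (i+p))` is convex and has `μ`-measure `p/q`. -/
def IsSpiralEquicovering (μ : Measure (ℝ × ℝ)) (q p : ℕ) : Prop :=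
  ∃ (O : ℝ × ℝ) (θ : ℤ → ℝ),
    (∀ j : ℤ, θ (j + (q : ℤ)) = θ j + 2 * Real.pi) ∧
    (∀ j : ℤ, θ j ≤ θ (j + 1)) ∧
    (∀ i : ℤ, Convex ℝ (Wedge O (θ i) (θ (i + (p : ℤ)))) ∧
      μ (Wedge O (θ i) (θ (i + (p : ℤ)))) = ENNReal.ofReal ((p : ℝ) / (q : ℝ)))

/-- If a point of the form `O + t • (cos ψ, sin ψ)` with `t > 0` lies in the wedge
`Wedge O α β`, then some translate of `ψ` by a multiple of `2π` lies in `[α, β]`. -/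
lemma angle_of_mem_wedge {O : ℝ × ℝ} {α β t ψ : ℝ} (ht : 0 < t)
    (hmem : O + t • (Real.cos ψ, Real.sin ψ) ∈ Wedge O α β) :
    ∃ k : ℤ, α ≤ ψ + 2 * Real.pi * k ∧ ψ + 2 * Real.pi * k ≤ β := by
  have hpyth := Real.sin_sq_add_cos_sq ψ
  rcases hmem with h | ⟨r, hr, φ, hφ, heq⟩
  · exfalso
    have h' : t • ((Real.cos ψ, Real.sin ψ) : ℝ × ℝ) = 0 := by
      have : O + t • ((Real.cos ψ, Real.sin ψ) : ℝ × ℝ) = O := h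
      simpa [add_eq_left] using this
    have h1 : t * Real.cos ψ = 0 := congrArg Prod.fst h'
    have h2 : t * Real.sin ψ = 0 := congrArg Prod.snd h'
    have hc : Real.cos ψ = 0 := by
      rcases mul_eq_zero.mp h1 with h | h
      · exact absurd h ht.ne'
      · exact h
    have hs : Real.sin ψ = 0 := by
      rcases mul_eq_zero.mp h2 with h | h
      · exact absurd h ht.ne'
      · exact h
    rw [hc, hs] at hpyth; norm_num at hpyth
  · have h' : t • ((Real.cos ψ, Real.sin ψ) : ℝ × ℝ)
      = r • ((Real.cos φ, Real.sin φ) : ℝ × ℝ) := by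
      have := heq.symm
      exact add_left_cancel (heq ▸ rfl : O + t • ((Real.cos ψ, Real.sin ψ) : ℝ × ℝ)
        = O + r • ((Real.cos φ, Real.sin φ) : ℝ × ℝ))
    have h1 : t * Real.cos ψ = r * Real.cos φ := congrArg Prod.fst h'
    have h2 : t * Real.sin ψ = r * Real.sin φ := congrArg Prod.snd h'
    have hpyth' := Real.sin_sq_add_cos_sq φ
    have hsq : t ^ 2 = r ^ 2 := by
      linear_combination (-(t^2)) * hpyth + r^2 * hpyth' +
        (t * Real.sin ψ + r * Real.sin φ) * h2 + (t * Real.cos ψ + r * Real.cos φ) * h1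
    have htr : t = r := by nlinarith [hsq]
    subst htr
    have hc : Real.cos φ = Real.cos ψ := (mul_left_cancel₀ ht.ne' h1).symm
    have hs : Real.sin φ = Real.sin ψ := (mul_left_cancel₀ ht.ne' h2).symm
    have : (φ : Real.Angle) = (ψ : Real.Angle) := Real.Angle.cos_sin_inj hc hs
    obtain ⟨k, hk⟩ := Real.Angle.angle_eq_iff_two_pi_dvd_sub.mp this
    refine ⟨k, ?_, ?_⟩
    · have := hφ.1; linarith [hk]
    · have := hφ.2; linarith [hk]

lemma real_sin_add_sin (x y : ℝ) :
    Real.sin x + Real.sin y = 2 * Real.sin ((x + y) / 2) * Real.cos ((x - y) / 2) := by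
  have h1 := Real.sin_add ((x + y) / 2) ((x - y) / 2)
  have h2 := Real.sin_sub ((x + y) / 2) ((x - y) / 2)
  have hx : (x + y) / 2 + (x - y) / 2 = x := by ring
  have hy : (x + y) / 2 - (x - y) / 2 = y := by ring
  rw [hx] at h1; rw [hy] at h2
  linarith

lemma real_cos_add_cos (x y : ℝ) :
    Real.cos x + Real.cos y = 2 * Real.cos ((x + y) / 2) * Real.cos ((x - y) / 2) := by
  have h1 := Real.cos_add ((x + y) / 2) ((x - y) / 2)
  have h2 := Real.cos_sub ((x + y) / 2) ((x - y) / 2)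
  have hx : (x + y) / 2 + (x - y) / 2 = x := by ring
  have hy : (x + y) / 2 - (x - y) / 2 = y := by ring
  rw [hx] at h1; rw [hy] at h2
  linarith

/-- A wedge whose angular span is strictly between `π` and `2π` is not convex. -/
lemma wedge_not_convex {O : ℝ × ℝ} {α β : ℝ} (h1 : Real.pi < β - α)
    (h2 : β - α < 2 * Real.pi) : ¬ Convex ℝ (Wedge O α β) := by
  intro hconv
  have hpi := Real.pi_pos
  have hαβ : α ≤ β := by linarith
  obtain ⟨δ, hδ⟩ : ∃ δ : ℝ, δ = (β - α) / 2 := ⟨_, rfl⟩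
  obtain ⟨m, hm⟩ : ∃ m : ℝ, m = (α + β) / 2 := ⟨_, rfl⟩
  obtain ⟨ψ, hψ⟩ : ∃ ψ : ℝ, ψ = m + Real.pi := ⟨_, rfl⟩
  have hcosδ : Real.cos δ < 0 := by
    apply Real.cos_neg_of_pi_div_two_lt_of_lt <;> rw [hδ] <;> linarith
  obtain ⟨t, htdef⟩ : ∃ t : ℝ, t = -Real.cos δ := ⟨_, rfl⟩
  have ht : 0 < t := by rw [htdef]; linarith
  -- the two endpoints of the arc
  have hA : O + (1 : ℝ) • ((Real.cos α, Real.sin α) : ℝ × ℝ) ∈ Wedge O α β :=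
    Or.inr ⟨1, one_pos, α, ⟨le_refl α, hαβ⟩, rfl⟩
  have hB : O + (1 : ℝ) • ((Real.cos β, Real.sin β) : ℝ × ℝ) ∈ Wedge O α β :=
    Or.inr ⟨1, one_pos, β, ⟨hαβ, le_refl β⟩, rfl⟩
  have hmid := hconv hA hB (by norm_num : (0:ℝ) ≤ 1/2) (by norm_num : (0:ℝ) ≤ 1/2)
    (by norm_num)
  -- the midpoint is `O + t • (cos ψ, sin ψ)`
  have hccos : Real.cos α + Real.cos β = 2 * Real.cos m * Real.cos δ := by
    rw [real_cos_add_cos]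
    have e : (α - β) / 2 = -δ := by rw [hδ]; ring
    rw [e, Real.cos_neg, hm]
  have hcsin : Real.sin α + Real.sin β = 2 * Real.sin m * Real.cos δ := by
    rw [real_sin_add_sin]
    have e : (α - β) / 2 = -δ := by rw [hδ]; ring
    rw [e, Real.cos_neg, hm]
  have hψcos : Real.cos ψ = -Real.cos m := by rw [hψ]; exact Real.cos_add_pi m
  have hψsin : Real.sin ψ = -Real.sin m := by rw [hψ]; exact Real.sin_add_pi m
  have hmid_eq : (1/2 : ℝ) • (O + (1 : ℝ) • ((Real.cos α, Real.sin α) : ℝ × ℝ))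
      + (1/2 : ℝ) • (O + (1 : ℝ) • ((Real.cos β, Real.sin β) : ℝ × ℝ))
      = O + t • ((Real.cos ψ, Real.sin ψ) : ℝ × ℝ) := by
    apply Prod.ext
    · simp only [Prod.fst_add, Prod.smul_fst, smul_eq_mul]
      rw [hψcos, htdef]
      linear_combination (1/2 : ℝ) * hccos
    · simp only [Prod.snd_add, Prod.smul_snd, smul_eq_mul]
      rw [hψsin, htdef]
      linear_combination (1/2 : ℝ) * hcsin
  rw [hmid_eq] at hmid
  obtain ⟨k, hk1, hk2⟩ := angle_of_mem_wedge ht hmid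
  -- but `ψ` lies strictly outside `[α, β]` modulo `2π`
  have hβψ : β < ψ := by rw [hψ, hm]; linarith
  have hψα : ψ - 2 * Real.pi < α := by rw [hψ, hm]; linarith
  have hkneg : (k : ℝ) < 0 := by nlinarith
  have hkle : k ≤ -1 := by
    have : k < 0 := by exact_mod_cast hkneg
    omega
  have : (k : ℝ) ≤ -1 := by exact_mod_cast hkle
  nlinarith

/-- A wedge with angular span `2π` is the whole plane. -/
lemma wedge_univ {O : ℝ × ℝ} {α : ℝ} : Wedge O α (α + 2 * Real.pi) = Set.univ := by
  have hpi := Real.pi_pos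
  ext x
  simp only [Set.mem_univ, iff_true]
  by_cases hx : x = O
  · exact Or.inl hx
  · set v : ℝ × ℝ := x - O with hv
    have hvne : v ≠ 0 := sub_ne_zero.mpr hx
    set z : ℂ := ⟨v.1, v.2⟩ with hz
    have hzne : z ≠ 0 := by
      intro h
      apply hvne
      have h1 : v.1 = 0 := congrArg Complex.re h
      have h2 : v.2 = 0 := congrArg Complex.im h
      exact Prod.ext h1 h2
    set t : ℝ := ‖z‖ with htdef
    have ht : 0 < t := by
      simp only [htdef]
      exact (norm_pos_iff.mpr hzne)
    set ψ : ℝ := Complex.arg z with hψ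
    have hcos : Real.cos ψ = v.1 / t := Complex.cos_arg hzne
    have hsin : Real.sin ψ = v.2 / t := Complex.sin_arg z
    set k : ℤ := ⌈(α - ψ) / (2 * Real.pi)⌉ with hk
    set φ : ℝ := ψ + k * (2 * Real.pi) with hφ
    have hk1 : (α - ψ) / (2 * Real.pi) ≤ (k : ℝ) := Int.le_ceil _
    have hk2 : (k : ℝ) < (α - ψ) / (2 * Real.pi) + 1 := Int.ceil_lt_add_one _
    have h2pi : (0:ℝ) < 2 * Real.pi := by linarith
    have hαφ : α ≤ φ := by
      rw [hφ]
      have h' : α - ψ ≤ (k : ℝ) * (2 * Real.pi) := (div_le_iff₀ h2pi).mp hk1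
      linarith
    have hφβ : φ ≤ α + 2 * Real.pi := by
      rw [hφ]
      have h' : ((k : ℝ) - 1) * (2 * Real.pi) < α - ψ :=
        (lt_div_iff₀ h2pi).mp (by linarith : (k : ℝ) - 1 < (α - ψ) / (2 * Real.pi))
      linarith
    refine Or.inr ⟨t, ht, φ, ⟨hαφ, hφβ⟩, ?_⟩
    have hcφ : Real.cos φ = Real.cos ψ := Real.cos_add_int_mul_two_pi ψ k
    have hsφ : Real.sin φ = Real.sin ψ := Real.sin_add_int_mul_two_pi ψ k
    rw [hcφ, hsφ, hcos, hsin]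
    apply Prod.ext
    · simp only [Prod.fst_add, Prod.smul_fst, smul_eq_mul]
      field_simp
      rw [Prod.fst_sub]; ring
    · simp only [Prod.snd_add, Prod.smul_snd, smul_eq_mul]
      field_simp
      rw [Prod.snd_sub]; ring

/-- If `p < q < 2p` with `p, q` coprime, no mass admits a `(q,p)`-spiral equicovering. -/
theorem no_spiral_equicovering_of_q_lt_two_p (p q : ℕ) (hp : 0 < p) (hpq : p < q)
    (h2 : q < 2 * p) (hcop : Nat.Coprime p q) :
    ∀ μ : Measure (ℝ × ℝ), IsMass μ → ¬ IsSpiralEquicovering μ q p := by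
  intro μ hμ hcov
  obtain ⟨O, θ, hper, hstep, hwedge⟩ := hcov
  have hpi := Real.pi_pos
  have hprob : IsProbabilityMeasure μ := hμ.1
  have hmono : Monotone θ := monotone_int_of_le_succ hstep
  have hq0 : (0:ℝ) < q := by exact_mod_cast hp.trans hpq
  -- every p-wedge has span at most π
  have hspan : ∀ i : ℤ, θ (i + (p : ℤ)) - θ i ≤ Real.pi := by
    intro i
    by_contra hgt
    push_neg at hgt
    have hle : θ (i + (p : ℤ)) ≤ θ i + 2 * Real.pi := by
      have h1 : θ (i + (p : ℤ)) ≤ θ (i + (q : ℤ)) := hmono (by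
        have : (p : ℤ) ≤ (q : ℤ) := by exact_mod_cast hpq.le
        omega)
      have h2 := hper i
      linarith
    rcases lt_or_eq_of_le hle with hlt | heq
    · exact wedge_not_convex hgt (by linarith) (hwedge i).1
    · -- span exactly 2π: wedge is the whole plane, measure 1 ≠ p/q
      have huniv : Wedge O (θ i) (θ (i + (p : ℤ))) = Set.univ := by
        rw [heq]; exact wedge_univ
      have hμW := (hwedge i).2
      rw [huniv, measure_univ] at hμW
      have hlt1 : ENNReal.ofReal ((p : ℝ) / (q : ℝ)) < 1 := by
        rw [ENNReal.ofReal_lt_one]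
        rw [div_lt_one hq0]
        exact_mod_cast hpq
      rw [← hμW] at hlt1
      exact lt_irrefl _ hlt1
  -- therefore θ is eventually and hence everywhere locally constant
  have hconst : ∀ j : ℤ, θ (j + 1) = θ j := by
    intro j
    set i : ℤ := j - (q : ℤ) with hi
    have e1 : θ (i + (q : ℤ)) = θ i + 2 * Real.pi := hper i
    have e2 : θ (i + 2 * (p : ℤ)) ≤ θ i + 2 * Real.pi := by
      have s1 := hspan i
      have s2 := hspan (i + (p : ℤ))
      have : i + (p : ℤ) + (p : ℤ) = i + 2 * (p : ℤ) := by ring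
      rw [this] at s2
      linarith
    have e3 : θ (i + (q : ℤ)) ≤ θ (i + (q : ℤ) + 1) := hstep _
    have e4 : θ (i + (q : ℤ) + 1) ≤ θ (i + 2 * (p : ℤ)) := hmono (by
      have : (q : ℤ) < 2 * (p : ℤ) := by exact_mod_cast h2
      omega)
    have hj : i + (q : ℤ) = j := by omega
    rw [hj] at e3 e4
    rw [hj] at e1
    linarith
  -- so θ q = θ 0, contradicting periodicity
  have hall : ∀ n : ℕ, θ (n : ℤ) = θ 0 := by
    intro n
    induction n with
    | zero => rfl
    | succ n ih =>
      have : ((n : ℤ) + 1) = ((n + 1 : ℕ) : ℤ) := by push_cast; ring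
      rw [← this, hconst n, ih]
  have := hper 0
  rw [zero_add, hall q] at this
  linarith
end
end

section
/- Let p and q be coprime positive integers with p < q and q < 3p − 3. Then there exists a mass μ on ℝ² that admits no (q,p)-spiral equicovering. -/
open MeasureTheory Set Real
open scoped ENNReal

noncomputable section

/-- any affine line has Lebesgue measure zero -/
lemma volume_affineLine {L : Set (ℝ × ℝ)} (hL : IsAffineLine L) : volume L = 0 := by
  obtain ⟨a, b, hb, rfl⟩ := hL
  have h1 : {x : ℝ × ℝ | ∃ t : ℝ, x = a + t • b} = (AffineSubspace.mk' a (ℝ ∙ b) : Set (ℝ × ℝ)) := by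
    ext x
    simp only [Set.mem_setOf_eq, SetLike.mem_coe, AffineSubspace.mem_mk',
      Submodule.mem_span_singleton]
    constructor
    · rintro ⟨t, rfl⟩
      exact ⟨t, by simp [vsub_eq_sub]⟩
    · rintro ⟨t, ht⟩
      refine ⟨t, ?_⟩
      have hx : x - a = t • b := ht.symm
      rw [← hx]; abel
  rw [h1]
  apply Measure.addHaar_affineSubspace
  intro htop
  have hd : (AffineSubspace.mk' a (ℝ ∙ b)).direction = ⊤ := by
    rw [htop]; exact AffineSubspace.direction_top ℝ _ _
  rw [AffineSubspace.direction_mk'] at hd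
  have hmem : ((-b.2, b.1) : ℝ × ℝ) ∈ (ℝ ∙ b) := hd ▸ Submodule.mem_top
  obtain ⟨t, ht⟩ := Submodule.mem_span_singleton.1 hmem
  have h1 : t * b.1 = -b.2 := congrArg Prod.fst ht
  have h2 : t * b.2 = b.1 := congrArg Prod.snd ht
  apply hb
  have hb1 : b.1 * (1 + t^2) = 0 := by linear_combination t * h1 - h2
  have ht2 : 0 < 1 + t^2 := by positivity
  have hb1' : b.1 = 0 := by
    rcases mul_eq_zero.1 hb1 with h | h
    · exact h
    · linarith
  have hb2' : b.2 = 0 := by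
    have := h1; rw [hb1', mul_zero] at this; linarith
  exact Prod.ext hb1' hb2'

/-- polar coordinates -/
lemma exists_polar {v : ℝ × ℝ} (hv : v ≠ 0) :
    ∃ r ψ : ℝ, 0 < r ∧ v = r • (Real.cos ψ, Real.sin ψ) := by
  set z : ℂ := ⟨v.1, v.2⟩ with hz
  have hz0 : z ≠ 0 := by
    intro h
    apply hv
    have h1 : z.re = 0 := by rw [h]; simp
    have h2 : z.im = 0 := by rw [h]; simp
    exact Prod.ext h1 h2
  have habs : 0 < ‖z‖ := norm_pos_iff.mpr hz0
  refine ⟨‖z‖, z.arg, habs, ?_⟩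
  have hc := Complex.cos_arg hz0
  have hs := Complex.sin_arg z
  have habs' : ‖z‖ ≠ 0 := ne_of_gt habs
  apply Prod.ext
  · show v.1 = ‖z‖ * Real.cos z.arg
    rw [hc]; field_simp; rfl
  · show v.2 = ‖z‖ * Real.sin z.arg
    rw [hs]; field_simp; rfl

/-- shift an angle into a window of length 2π -/
lemma exists_shift (t ψ : ℝ) :
    ∃ ψ' : ℝ, t ≤ ψ' ∧ ψ' < t + 2 * π ∧ Real.cos ψ' = Real.cos ψ ∧ Real.sin ψ' = Real.sin ψ := by
  have hp : (0:ℝ) < 2 * π := by positivity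
  have hdef : toIcoMod hp t ψ = ψ + (-(toIcoDiv hp t ψ) : ℤ) * (2 * π) := by
    have h : toIcoMod hp t ψ = ψ - toIcoDiv hp t ψ • (2*π) := rfl
    rw [h, zsmul_eq_mul]; push_cast; ring
  refine ⟨toIcoMod hp t ψ, (toIcoMod_mem_Ico hp t ψ).1, (toIcoMod_mem_Ico hp t ψ).2, ?_, ?_⟩
  · rw [hdef, Real.cos_add_int_mul_two_pi]
  · rw [hdef, Real.sin_add_int_mul_two_pi]

lemma wedge_mono {O : ℝ × ℝ} {a b a' b' : ℝ} (ha : a' ≤ a) (hb : b ≤ b') :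
    Wedge O a b ⊆ Wedge O a' b' := by
  rintro x (hx | ⟨r, hr, θ, ⟨h1, h2⟩, rfl⟩)
  · exact Or.inl hx
  · exact Or.inr ⟨r, hr, θ, ⟨le_trans ha h1, le_trans h2 hb⟩, rfl⟩

lemma wedge_union {O : ℝ × ℝ} {a b c : ℝ} (hab : a ≤ b) (hbc : b ≤ c) :
    Wedge O a c = Wedge O a b ∪ Wedge O b c := by
  apply Subset.antisymm
  · rintro x (hx | ⟨r, hr, θ, ⟨h1, h2⟩, rfl⟩)
    · exact Or.inl (Or.inl hx)
    · rcases le_total θ b with h | h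
      · exact Or.inl (Or.inr ⟨r, hr, θ, ⟨h1, h⟩, rfl⟩)
      · exact Or.inr (Or.inr ⟨r, hr, θ, ⟨h, h2⟩, rfl⟩)
  · exact union_subset (wedge_mono le_rfl hbc) (wedge_mono hab le_rfl)

lemma wedge_periodic (O : ℝ × ℝ) (a b : ℝ) :
    Wedge O (a + 2*π) (b + 2*π) = Wedge O a b := by
  ext x
  constructor
  · rintro (hx | ⟨r, hr, θ, ⟨h1, h2⟩, rfl⟩)
    · exact Or.inl hx
    · refine Or.inr ⟨r, hr, θ - 2*π, ⟨by linarith, by linarith⟩, ?_⟩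
      rw [Real.cos_sub_two_pi, Real.sin_sub_two_pi]
  · rintro (hx | ⟨r, hr, θ, ⟨h1, h2⟩, rfl⟩)
    · exact Or.inl hx
    · refine Or.inr ⟨r, hr, θ + 2*π, ⟨by linarith, by linarith⟩, ?_⟩
      rw [Real.cos_add_two_pi, Real.sin_add_two_pi]

lemma wedge_self_subset_line (O : ℝ × ℝ) (a : ℝ) :
    Wedge O a a ⊆ {x | ∃ t : ℝ, x = O + t • (Real.cos a, Real.sin a)} := by
  rintro x (hx | ⟨r, hr, θ, ⟨h1, h2⟩, rfl⟩)
  · rw [Set.mem_singleton_iff] at hx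
    exact ⟨0, by simp [hx]⟩
  · have : θ = a := le_antisymm h2 h1
    exact ⟨r, by rw [this]⟩

lemma wedge_eq_univ (O : ℝ × ℝ) (a : ℝ) : Wedge O a (a + 2*π) = Set.univ := by
  apply Set.eq_univ_of_forall
  intro x
  by_cases hx : x = O
  · exact Or.inl (by simp [hx])
  · obtain ⟨r, ψ, hr, hv⟩ := exists_polar (sub_ne_zero.2 hx)
    obtain ⟨ψ', h1, h2, hc, hs⟩ := exists_shift a ψ
    refine Or.inr ⟨r, hr, ψ', ⟨h1, by linarith⟩, ?_⟩
    rw [hc, hs, ← hv]; abel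

/-- the half-plane description of a wedge of angular width π -/
lemma wedge_halfplane (O : ℝ × ℝ) (t : ℝ) :
    Wedge O t (t + π) = {z : ℝ × ℝ | 0 ≤ (z.1 - O.1) * (-Real.sin t) + (z.2 - O.2) * Real.cos t} := by
  ext z
  constructor
  · rintro (hz | ⟨r, hr, θ, ⟨h1, h2⟩, rfl⟩)
    · rw [Set.mem_singleton_iff] at hz
      simp [hz]
    · have hsin : 0 ≤ Real.sin (θ - t) := Real.sin_nonneg_of_nonneg_of_le_pi (by linarith) (by linarith)
      have key : (O.1 + r * Real.cos θ - O.1) * (-Real.sin t) + (O.2 + r * Real.sin θ - O.2) * Real.cos t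
          = r * Real.sin (θ - t) := by
        rw [Real.sin_sub]; ring
      show (0:ℝ) ≤ _
      have h1' : (O + r • (Real.cos θ, Real.sin θ)).1 = O.1 + r * Real.cos θ := rfl
      have h2' : (O + r • (Real.cos θ, Real.sin θ)).2 = O.2 + r * Real.sin θ := rfl
      rw [h1', h2', key]
      positivity
  · intro hz
    by_cases hzO : z = O
    · exact Or.inl (by simp [hzO])
    · obtain ⟨r, ψ, hr, hv⟩ := exists_polar (sub_ne_zero.2 hzO)
      obtain ⟨ψ', hA, hB, hc, hs⟩ := exists_shift t ψ
      have hz1 : z.1 - O.1 = r * Real.cos ψ := congrArg Prod.fst hv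
      have hz2 : z.2 - O.2 = r * Real.sin ψ := congrArg Prod.snd hv
      have hval : 0 ≤ r * Real.sin (ψ' - t) := by
        rw [Real.sin_sub, hc, hs]
        have := hz
        rw [Set.mem_setOf_eq, hz1, hz2] at this
        nlinarith [this]
      have hsin : 0 ≤ Real.sin (ψ' - t) := nonneg_of_mul_nonneg_right hval hr
      -- ψ' - t ∈ [0, 2π), sin ≥ 0 ⇒ ψ' - t ≤ π
      have hle : ψ' - t ≤ π := by
        by_contra hgt
        push_neg at hgt
        have h2π : ψ' - t < 2*π := by linarith
        have : Real.sin (ψ' - t) < 0 := by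
          have := Real.sin_neg_of_neg_of_neg_pi_lt (x := ψ' - t - 2*π) (by linarith) (by linarith)
          rwa [show ψ' - t - 2*π = ψ' - t - 2*π from rfl, Real.sin_sub_two_pi] at this
        linarith
      refine Or.inr ⟨r, hr, ψ', ⟨hA, by linarith⟩, ?_⟩
      rw [hc, hs, ← hv]
      apply Prod.ext <;> simp

lemma wedge_measurable (O : ℝ × ℝ) (a b : ℝ) : MeasurableSet (Wedge O a b) := by
  have key : Wedge O a b = {O} ∪ ⋃ n : ℕ,
      (fun p : ℝ × ℝ => O + p.1 • (Real.cos p.2, Real.sin p.2)) ''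
        (Set.Icc (1/(n+1) : ℝ) (n+1) ×ˢ Set.Icc a b) := by
    apply Subset.antisymm
    · rintro x (hx | ⟨r, hr, θ, hθ, rfl⟩)
      · exact Or.inl hx
      · obtain ⟨n, hn⟩ := exists_nat_ge (max r (1/r))
        refine Or.inr (Set.mem_iUnion.2 ⟨n, ⟨(r, θ), ⟨⟨?_, ?_⟩, hθ⟩, rfl⟩⟩)
        · have h1 : 1/r ≤ (n:ℝ) + 1 := le_trans (le_max_right _ _) (hn.trans (by norm_num))
          rw [div_le_iff₀ hr] at h1
          rw [div_le_iff₀ (by positivity : (0:ℝ) < (n:ℝ)+1)]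
          nlinarith
        · exact le_trans (le_max_left _ _) (hn.trans (by norm_num))
    · apply Set.union_subset
      · exact fun x hx => Or.inl hx
      · rintro x hx
        obtain ⟨n, ⟨p, ⟨⟨hp1, hp2⟩, hpθ⟩, rfl⟩⟩ := Set.mem_iUnion.1 hx
        exact Or.inr ⟨p.1, lt_of_lt_of_le (by positivity) hp1, p.2, hpθ, rfl⟩
  rw [key]
  apply MeasurableSet.union (measurableSet_singleton O)
  apply MeasurableSet.iUnion
  intro n
  apply IsCompact.measurableSet
  apply IsCompact.image (isCompact_Icc.prod isCompact_Icc)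
  fun_prop

lemma sincos_eq {θ₁ θ₂ : ℝ} (hc : Real.cos θ₁ = Real.cos θ₂) (hs : Real.sin θ₁ = Real.sin θ₂) :
    ∃ k : ℤ, θ₂ = θ₁ + k * (2*π) := by
  have h1 : Real.cos (θ₂ - θ₁) = 1 := by
    rw [Real.cos_sub, hc, hs]
    nlinarith [Real.sin_sq_add_cos_sq θ₂]
  obtain ⟨k, hk⟩ := (Real.cos_eq_one_iff _).1 h1
  exact ⟨k, by linarith⟩

lemma wedge_inter {O : ℝ × ℝ} {a b c : ℝ} (hab : a ≤ b) (hbc : b ≤ c) (hca : c ≤ a + 2*π) :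
    Wedge O a b ∩ Wedge O b c ⊆
      {x | ∃ t : ℝ, x = O + t • (Real.cos b, Real.sin b)} ∪
      {x | ∃ t : ℝ, x = O + t • (Real.cos a, Real.sin a)} := by
  rintro x ⟨hx1, hx2⟩
  rcases hx1 with hO | ⟨r, hr, θ₁, ⟨ha1, hb1⟩, hx⟩
  · rw [Set.mem_singleton_iff] at hO
    exact Or.inl ⟨0, by simp [hO]⟩
  rcases hx2 with hO | ⟨r', hr', θ₂, ⟨hb2, hc2⟩, hx'⟩
  · rw [Set.mem_singleton_iff] at hO
    exact Or.inl ⟨0, by simp [hO]⟩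
  have e1 : r * Real.cos θ₁ = r' * Real.cos θ₂ := by
    have := congrArg Prod.fst (hx ▸ hx' : O + r • (Real.cos θ₁, Real.sin θ₁) = O + r' • (Real.cos θ₂, Real.sin θ₂))
    simpa using this
  have e2 : r * Real.sin θ₁ = r' * Real.sin θ₂ := by
    have := congrArg Prod.snd (hx ▸ hx' : O + r • (Real.cos θ₁, Real.sin θ₁) = O + r' • (Real.cos θ₂, Real.sin θ₂))
    simpa using this
  have hsq : r^2 = r'^2 := by
    have t1 := Real.sin_sq_add_cos_sq θ₁
    have t2 := Real.sin_sq_add_cos_sq θ₂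
    linear_combination (-(r^2)) * t1 + r'^2 * t2 + (r*Real.sin θ₁ + r'*Real.sin θ₂) * e2 + (r*Real.cos θ₁ + r'*Real.cos θ₂) * e1
  have hrr : r = r' := by
    have h : (r - r') * (r + r') = 0 := by nlinarith
    rcases mul_eq_zero.1 h with h | h
    · linarith
    · linarith
  subst hrr
  have hc : Real.cos θ₁ = Real.cos θ₂ := mul_left_cancel₀ (ne_of_gt hr) e1
  have hs : Real.sin θ₁ = Real.sin θ₂ := mul_left_cancel₀ (ne_of_gt hr) e2
  obtain ⟨k, hk⟩ := sincos_eq hc hs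
  have hπ := Real.pi_pos
  have hk0 : 0 ≤ k := by
    by_contra hneg
    push_neg at hneg
    have hk1 : k ≤ -1 := by omega
    have : (k:ℝ) ≤ -1 := by exact_mod_cast hk1
    have : θ₂ ≤ θ₁ - 2*π := by nlinarith
    linarith
  have hk1 : k ≤ 1 := by
    by_contra hgt
    push_neg at hgt
    have : (2:ℝ) ≤ (k:ℝ) := by exact_mod_cast hgt
    have : θ₁ + 4*π ≤ θ₂ := by nlinarith
    linarith
  interval_cases k
  · -- θ₂ = θ₁, both = b
    have : θ₁ = b := by push_cast at hk; linarith [le_antisymm hb1 (by linarith : b ≤ θ₁)]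
    exact Or.inl ⟨r, by rw [← this, hx]⟩
  · -- θ₂ = θ₁ + 2π, θ₁ = a
    have hθa : θ₁ = a := by push_cast at hk; linarith
    exact Or.inr ⟨r, by rw [← hθa, hx]⟩

lemma wedge_not_convex_s1 {O : ℝ × ℝ} {a b : ℝ} (h1 : π < b - a) (h2 : b - a < 2*π) :
    ¬ Convex ℝ (Wedge O a b) := by
  intro hconv
  have hπ := Real.pi_pos
  set m := (a + b) / 2 with hm
  set d := (b - a) / 2 with hd
  set c1 := Real.cos d with hc1
  have hc1neg : c1 < 0 := by
    rw [hc1]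
    apply Real.cos_neg_of_pi_div_two_lt_of_lt
    · rw [hd]; linarith
    · rw [hd]; linarith
  have hP1 : O + (1:ℝ) • (Real.cos a, Real.sin a) ∈ Wedge O a b :=
    Or.inr ⟨1, one_pos, a, ⟨le_rfl, by linarith⟩, rfl⟩
  have hP2 : O + (1:ℝ) • (Real.cos b, Real.sin b) ∈ Wedge O a b :=
    Or.inr ⟨1, one_pos, b, ⟨by linarith, le_rfl⟩, rfl⟩
  have hM := hconv hP1 hP2 (by norm_num : (0:ℝ) ≤ 1/2) (by norm_num : (0:ℝ) ≤ 1/2) (by norm_num)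
  have hMval : (1/2 : ℝ) • (O + (1:ℝ) • (Real.cos a, Real.sin a)) + (1/2 : ℝ) • (O + (1:ℝ) • (Real.cos b, Real.sin b))
      = O + (c1 * Real.cos m, c1 * Real.sin m) := by
    have ha' : a = m - d := by rw [hm, hd]; ring
    have hb' : b = m + d := by rw [hm, hd]; ring
    have hca : Real.cos a + Real.cos b = 2 * Real.cos m * c1 := by
      rw [hc1, ha', hb', Real.cos_sub, Real.cos_add]; ring
    have hsa : Real.sin a + Real.sin b = 2 * Real.sin m * c1 := by
      rw [hc1, ha', hb', Real.sin_sub, Real.sin_add]; ring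
    apply Prod.ext
    · show (1/2:ℝ) * (O.1 + 1 * Real.cos a) + (1/2:ℝ) * (O.1 + 1 * Real.cos b) = O.1 + c1 * Real.cos m
      nlinarith [hca]
    · show (1/2:ℝ) * (O.2 + 1 * Real.sin a) + (1/2:ℝ) * (O.2 + 1 * Real.sin b) = O.2 + c1 * Real.sin m
      nlinarith [hsa]
  rw [hMval] at hM
  -- now M = O + (c1 cos m, c1 sin m) with c1 < 0 must be in the wedge: contradiction
  rcases hM with hO | ⟨r, hr, θ, ⟨haθ, hbθ⟩, hx⟩
  · rw [Set.mem_singleton_iff] at hO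
    have h1' : c1 * Real.cos m = 0 := by
      have := congrArg Prod.fst hO; simpa using this
    have h2' : c1 * Real.sin m = 0 := by
      have := congrArg Prod.snd hO; simpa using this
    have hcm : Real.cos m = 0 := by
      rcases mul_eq_zero.1 h1' with h | h
      · exact absurd h (ne_of_lt hc1neg)
      · exact h
    have hsm : Real.sin m = 0 := by
      rcases mul_eq_zero.1 h2' with h | h
      · exact absurd h (ne_of_lt hc1neg)
      · exact h
    nlinarith [Real.sin_sq_add_cos_sq m]
  · have e1 : r * Real.cos θ = c1 * Real.cos m := by
      have := congrArg Prod.fst hx; simp at this; linarith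
    have e2 : r * Real.sin θ = c1 * Real.sin m := by
      have := congrArg Prod.snd hx; simp at this; linarith
    have e1' : r * Real.cos θ = (-c1) * Real.cos (m + π) := by
      rw [Real.cos_add_pi]; linarith [e1]
    have e2' : r * Real.sin θ = (-c1) * Real.sin (m + π) := by
      rw [Real.sin_add_pi]; linarith [e2]
    have hsq : r^2 = c1^2 := by
      have t1 := Real.sin_sq_add_cos_sq θ
      have t2 := Real.sin_sq_add_cos_sq (m + π)
      have key : r^2 = (-c1)^2 := by
        linear_combination (-(r^2)) * t1 + (-c1)^2 * t2 + (r*Real.sin θ + (-c1)*Real.sin (m+π)) * e2' + (r*Real.cos θ + (-c1)*Real.cos (m+π)) * e1'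
      linarith [key, sq_abs c1]
    have hrc : r = -c1 := by
      have h : (r - (-c1)) * (r + (-c1)) = 0 := by nlinarith
      rcases mul_eq_zero.1 h with h | h
      · linarith
      · linarith
    have hc : Real.cos θ = Real.cos (m + π) := by
      have : r * Real.cos θ = r * Real.cos (m + π) := by rw [e1', hrc]
      exact mul_left_cancel₀ (ne_of_gt hr) this
    have hs : Real.sin θ = Real.sin (m + π) := by
      have : r * Real.sin θ = r * Real.sin (m + π) := by rw [e2', hrc]
      exact mul_left_cancel₀ (ne_of_gt hr) this
    obtain ⟨k, hk⟩ := sincos_eq hc hs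
    -- m + π = θ + 2πk, θ ∈ [a,b], m+π-b ∈ (0, π/2), m-π-a < 0
    have hub : m + π - b > 0 := by rw [hm]; linarith
    have hlb : m - π - a < 0 := by rw [hm]; linarith

    have hkpos : (0:ℝ) < (k:ℝ) := by nlinarith
    have hkz : 0 < k := by exact_mod_cast hkpos
    have hk1 : (1:ℝ) ≤ (k:ℝ) := by exact_mod_cast hkz
    nlinarith

def SqA : Set (ℝ × ℝ) := Set.Icc (-1:ℝ) 1 ×ˢ Set.Icc (-1:ℝ) 1
def SqB : Set (ℝ × ℝ) := Set.Icc (3:ℝ) 5 ×ˢ Set.Icc (-1:ℝ) 1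
def SqC : Set (ℝ × ℝ) := Set.Icc (-1:ℝ) 1 ×ˢ Set.Icc (3:ℝ) 5

def myMass : Measure (ℝ × ℝ) :=
  (12⁻¹ : ℝ≥0∞) • (volume.restrict SqA + volume.restrict SqB + volume.restrict SqC)

lemma vol_sq (a b c d : ℝ) : volume (Set.Icc a b ×ˢ Set.Icc c d) = ENNReal.ofReal (b-a) * ENNReal.ofReal (d-c) := by
  rw [MeasureTheory.Measure.volume_eq_prod, Measure.prod_prod, Real.volume_Icc, Real.volume_Icc]

lemma sq_meas (a b c d : ℝ) : MeasurableSet (Set.Icc a b ×ˢ Set.Icc c d) :=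
  measurableSet_Icc.prod measurableSet_Icc

lemma measA : MeasurableSet SqA := by rw [SqA]; exact sq_meas _ _ _ _
lemma measB : MeasurableSet SqB := by rw [SqB]; exact sq_meas _ _ _ _
lemma measC : MeasurableSet SqC := by rw [SqC]; exact sq_meas _ _ _ _

lemma myMass_apply (t : Set (ℝ × ℝ)) :
    myMass t = 12⁻¹ * (volume (t ∩ SqA) + volume (t ∩ SqB) + volume (t ∩ SqC)) := by
  rw [myMass, Measure.smul_apply, Measure.add_apply, Measure.add_apply,
    Measure.restrict_apply' measA, Measure.restrict_apply' measB,
    Measure.restrict_apply' measC]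
  rfl

lemma myMass_prob : IsProbabilityMeasure myMass := by
  constructor
  rw [myMass_apply, Set.univ_inter, Set.univ_inter, Set.univ_inter, SqA, SqB, SqC,
    vol_sq, vol_sq, vol_sq]
  rw [show (1-(-1):ℝ) = 2 by norm_num, show (5-3:ℝ) = 2 by norm_num, ENNReal.ofReal_ofNat,
    show ((2:ℝ≥0∞) * 2 + 2 * 2 + 2 * 2) = 12 by norm_num]
  exact ENNReal.inv_mul_cancel (by norm_num) (by norm_num)

lemma myMass_line_null {L : Set (ℝ × ℝ)} (hL : IsAffineLine L) : myMass L = 0 := by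
  rw [myMass_apply]
  have h0 : volume L = 0 := volume_affineLine hL
  have h1 : volume (L ∩ SqA) = 0 := measure_mono_null Set.inter_subset_left h0
  have h2 : volume (L ∩ SqB) = 0 := measure_mono_null Set.inter_subset_left h0
  have h3 : volume (L ∩ SqC) = 0 := measure_mono_null Set.inter_subset_left h0
  rw [h1, h2, h3]
  simp

lemma isAffineLine_horiz (c : ℝ) : IsAffineLine {z : ℝ × ℝ | z.2 = c} := by
  refine ⟨(0, c), (1, 0), by simp, ?_⟩
  ext z
  simp only [Set.mem_setOf_eq]
  constructor
  · intro h
    exact ⟨z.1, by apply Prod.ext <;> simp [h]⟩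
  · rintro ⟨t, rfl⟩
    simp

lemma isAffineLine_vert (c : ℝ) : IsAffineLine {z : ℝ × ℝ | z.1 = c} := by
  refine ⟨(c, 0), (0, 1), by simp, ?_⟩
  ext z
  simp only [Set.mem_setOf_eq]
  constructor
  · intro h
    exact ⟨z.2, by apply Prod.ext <;> simp [h]⟩
  · rintro ⟨t, rfl⟩
    simp

lemma twelfth_four : (12⁻¹ : ℝ≥0∞) * 4 = ENNReal.ofReal (1/3) := by
  have h3 : ENNReal.ofReal (1/3) = (3:ℝ≥0∞)⁻¹ := by
    rw [show (1/3:ℝ) = (3:ℝ)⁻¹ by norm_num, ENNReal.ofReal_inv_of_pos (by norm_num),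
      ENNReal.ofReal_ofNat]
  rw [h3, show (12:ℝ≥0∞) = 4 * 3 by norm_num,
    ENNReal.mul_inv (Or.inl (by norm_num)) (Or.inl (by norm_num)),
    mul_comm ((4:ℝ≥0∞))⁻¹ _, mul_assoc, ENNReal.inv_mul_cancel (by norm_num) (by norm_num), mul_one]

-- the three half-plane estimates
lemma halfplane_case1 {c : ℝ} (hc : 1 ≤ c) : myMass {z : ℝ × ℝ | c ≤ z.2} ≤ ENNReal.ofReal (1/3) := by
  rw [myMass_apply]
  have hA : volume ({z : ℝ × ℝ | c ≤ z.2} ∩ SqA) = 0 := by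
    refine measure_mono_null ?_ (volume_affineLine (isAffineLine_horiz c))
    rintro z ⟨hz1, hz2⟩
    rw [SqA, Set.mem_prod] at hz2
    have := hz2.2.2
    exact le_antisymm (by linarith [hz1]) hz1
  have hB : volume ({z : ℝ × ℝ | c ≤ z.2} ∩ SqB) = 0 := by
    refine measure_mono_null ?_ (volume_affineLine (isAffineLine_horiz c))
    rintro z ⟨hz1, hz2⟩
    rw [SqB, Set.mem_prod] at hz2
    have := hz2.2.2
    exact le_antisymm (by linarith [hz1]) hz1
  have hC : volume ({z : ℝ × ℝ | c ≤ z.2} ∩ SqC) ≤ 4 := by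
    calc volume ({z : ℝ × ℝ | c ≤ z.2} ∩ SqC) ≤ volume SqC := measure_mono Set.inter_subset_right
    _ = 4 := by
        rw [SqC, vol_sq, show (1-(-1):ℝ) = 2 by norm_num, show (5-3:ℝ) = 2 by norm_num,
          ENNReal.ofReal_ofNat]
        norm_num
  rw [hA, hB, zero_add, zero_add]
  exact le_trans (mul_le_mul_right hC _) (le_of_eq twelfth_four)

lemma halfplane_case2 {c : ℝ} (hc : 1 ≤ c) : myMass {z : ℝ × ℝ | c ≤ z.1} ≤ ENNReal.ofReal (1/3) := by
  rw [myMass_apply]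
  have hA : volume ({z : ℝ × ℝ | c ≤ z.1} ∩ SqA) = 0 := by
    refine measure_mono_null ?_ (volume_affineLine (isAffineLine_vert c))
    rintro z ⟨hz1, hz2⟩
    rw [SqA, Set.mem_prod] at hz2
    have := hz2.1.2
    exact le_antisymm (by linarith [hz1]) hz1
  have hC : volume ({z : ℝ × ℝ | c ≤ z.1} ∩ SqC) = 0 := by
    refine measure_mono_null ?_ (volume_affineLine (isAffineLine_vert c))
    rintro z ⟨hz1, hz2⟩
    rw [SqC, Set.mem_prod] at hz2
    have := hz2.1.2
    exact le_antisymm (by linarith [hz1]) hz1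
  have hB : volume ({z : ℝ × ℝ | c ≤ z.1} ∩ SqB) ≤ 4 := by
    calc volume ({z : ℝ × ℝ | c ≤ z.1} ∩ SqB) ≤ volume SqB := measure_mono Set.inter_subset_right
    _ = 4 := by
        rw [SqB, vol_sq, show (5-3:ℝ) = 2 by norm_num, show (1-(-1):ℝ) = 2 by norm_num,
          ENNReal.ofReal_ofNat]
        norm_num
  rw [hA, hC, zero_add, add_zero]
  exact le_trans (mul_le_mul_right hB _) (le_of_eq twelfth_four)

lemma halfplane_case3 {c : ℝ} (hc : c < 2) : myMass {z : ℝ × ℝ | z.1 + z.2 ≤ c} ≤ ENNReal.ofReal (1/3) := by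
  rw [myMass_apply]
  have hB : volume ({z : ℝ × ℝ | z.1 + z.2 ≤ c} ∩ SqB) = 0 := by
    have : ({z : ℝ × ℝ | z.1 + z.2 ≤ c} ∩ SqB) = ∅ := by
      ext z
      simp only [Set.mem_inter_iff, Set.mem_setOf_eq, Set.mem_empty_iff_false, iff_false]
      rintro ⟨hz1, hz2⟩
      rw [SqB, Set.mem_prod] at hz2
      obtain ⟨⟨h1, _⟩, ⟨h2, _⟩⟩ := hz2
      linarith
    rw [this, measure_empty]
  have hC : volume ({z : ℝ × ℝ | z.1 + z.2 ≤ c} ∩ SqC) = 0 := by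
    have : ({z : ℝ × ℝ | z.1 + z.2 ≤ c} ∩ SqC) = ∅ := by
      ext z
      simp only [Set.mem_inter_iff, Set.mem_setOf_eq, Set.mem_empty_iff_false, iff_false]
      rintro ⟨hz1, hz2⟩
      rw [SqC, Set.mem_prod] at hz2
      obtain ⟨⟨h1, _⟩, ⟨h2, _⟩⟩ := hz2
      linarith
    rw [this, measure_empty]
  have hA : volume ({z : ℝ × ℝ | z.1 + z.2 ≤ c} ∩ SqA) ≤ 4 := by
    calc volume ({z : ℝ × ℝ | z.1 + z.2 ≤ c} ∩ SqA) ≤ volume SqA := measure_mono Set.inter_subset_right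
    _ = 4 := by
        rw [SqA, vol_sq, show (1-(-1):ℝ) = 2 by norm_num, ENNReal.ofReal_ofNat]
        norm_num
  rw [hB, hC, add_zero, add_zero]
  exact le_trans (mul_le_mul_right hA _) (le_of_eq twelfth_four)

lemma cs_ne_zero (a : ℝ) : ((Real.cos a, Real.sin a) : ℝ × ℝ) ≠ 0 := by
  intro h
  have h1 : Real.cos a = 0 := congrArg Prod.fst h
  have h2 : Real.sin a = 0 := congrArg Prod.snd h
  nlinarith [Real.sin_sq_add_cos_sq a]

lemma myMass_ray_null (O : ℝ × ℝ) (a : ℝ) : myMass (Wedge O a a) = 0 :=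
  measure_mono_null (wedge_self_subset_line O a)
    (myMass_line_null ⟨O, (Real.cos a, Real.sin a), cs_ne_zero a, rfl⟩)

/-- additivity of wedge measure -/
lemma wedge_add {O : ℝ × ℝ} {a b c : ℝ} (hab : a ≤ b) (hbc : b ≤ c) (hca : c ≤ a + 2*π) :
    myMass (Wedge O a c) = myMass (Wedge O a b) + myMass (Wedge O b c) := by
  have hinter : myMass (Wedge O a b ∩ Wedge O b c) = 0 := by
    refine measure_mono_null (wedge_inter hab hbc hca) (measure_union_null ?_ ?_)
    · exact myMass_line_null ⟨O, (Real.cos b, Real.sin b), cs_ne_zero b, rfl⟩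
    · exact myMass_line_null ⟨O, (Real.cos a, Real.sin a), cs_ne_zero a, rfl⟩
  have key := measure_union_add_inter (μ := myMass) (Wedge O a b) (wedge_measurable O b c)
  rw [hinter, add_zero] at key
  rw [wedge_union hab hbc, key]

lemma periodic_int {f : ℤ → ℝ≥0∞} {d : ℤ} (h : ∀ i, f (i + d) = f i) :
    ∀ (n : ℤ) (i : ℤ), f (i + n * d) = f i := by
  intro n
  induction n using Int.induction_on with
  | zero => intro i; simp
  | succ k ih =>
      intro i
      have : i + (k + 1) * d = (i + d) + k * d := by ring
      rw [this, ih, h]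
  | pred k ih =>
      intro i
      have : i + (-(k:ℤ) - 1) * d + d = i + (-(k:ℤ)) * d := by ring
      have h2 := h (i + (-(k:ℤ) - 1) * d)
      rw [this] at h2
      rw [← ih i, ← h2]

theorem main_technical (p q : ℕ) (hp : 0 < p) (hpq : p < q) (h3 : q + 3 < 3 * p)
    (hcop : Nat.Coprime p q) : ¬ IsSpiralEquicovering myMass q p := by
  have hπ := Real.pi_pos
  rintro ⟨O, θ, hper, hstep, hcov⟩
  have hq0 : 0 < (q:ℝ) := by exact_mod_cast lt_trans hp hpq
  -- monotonicity
  have hmono : ∀ j k : ℤ, j ≤ k → θ j ≤ θ k := by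
    intro j k hjk
    exact Int.le_induction (motive := fun k _ => θ j ≤ θ k) le_rfl (fun n _ ih => le_trans ih (hstep n)) k hjk
  -- shifts
  have hshift : ∀ (n : ℤ) (j : ℤ), θ (j + n * q) = θ j + n * (2*π) := by
    intro n
    induction n using Int.induction_on with
    | zero => intro j; simp
    | succ k ih =>
        intro j
        have e : j + (k+1) * q = (j + k * q) + q := by ring
        rw [e, hper, ih]; push_cast; ring
    | pred k ih =>
        intro j
        have e : (j + (-(k:ℤ)-1) * q) + (q:ℤ) = j + (-(k:ℤ)) * q := by ring
        have h2 := hper (j + (-(k:ℤ)-1) * q)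
        rw [e, ih] at h2
        push_cast at h2 ⊢
        linarith
  -- 2π bound on p-blocks
  have hspan2 : ∀ i : ℤ, θ (i + p) ≤ θ i + 2*π := by
    intro i
    have h1 : θ (i + p) ≤ θ (i + q) := hmono _ _ (by omega)
    have h2 : θ (i + q) = θ i + 2*π := hper i
    linarith
  -- probability facts
  have huniv : myMass Set.univ = 1 := myMass_prob.measure_univ
  have hlt1 : ENNReal.ofReal ((p:ℝ)/(q:ℝ)) < 1 := by
    apply ENNReal.ofReal_lt_one.2
    rw [div_lt_one hq0]
    exact_mod_cast hpq
  -- π bound on p-blocks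
  have hspanπ : ∀ i : ℤ, θ (i + p) ≤ θ i + π := by
    intro i
    by_contra hgt
    push_neg at hgt
    rcases lt_or_ge (θ (i+p) - θ i) (2*π) with hlt | hge
    · exact wedge_not_convex_s1 (by linarith) hlt (hcov i).1
    · have heq : θ (i + p) = θ i + 2*π := le_antisymm (hspan2 i) (by linarith)
      have := (hcov i).2
      rw [heq, wedge_eq_univ, huniv] at this
      exact absurd this.symm (ne_of_lt hlt1)
  -- arc measures
  set s : ℤ → ℝ≥0∞ := fun j => myMass (Wedge O (θ j) (θ (j+1))) with hs
  have hsum : ∀ (n : ℕ), n ≤ q → ∀ i : ℤ, myMass (Wedge O (θ i) (θ (i + n))) =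
      ∑ j ∈ Finset.range n, s (i + j) := by
    intro n
    induction n with
    | zero => intro _ i; simpa using myMass_ray_null O (θ i)
    | succ m ih =>
        intro hmq i
        have e1 : i + ((m:ℤ)+1) = (i + m) + 1 := by ring
        have hadd : myMass (Wedge O (θ i) (θ (i + ((m:ℕ):ℤ) + 1))) =
            myMass (Wedge O (θ i) (θ (i + m))) + myMass (Wedge O (θ (i + m)) (θ (i + m + 1))) := by
          apply wedge_add (hmono _ _ (by omega)) (hmono _ _ (by omega))
          have : θ (i + m + 1) ≤ θ (i + q) := hmono _ _ (by omega)
          rw [hper i] at this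
          linarith
        push_cast
        rw [show i + ((m:ℤ)+1) = i + (m:ℤ) + 1 by ring, hadd, ih (by omega) i,
          Finset.sum_range_succ]
    -- done
  have hblocks : ∀ i : ℤ, ∑ j ∈ Finset.range p, s (i + j) = ENNReal.ofReal ((p:ℝ)/(q:ℝ)) := by
    intro i
    rw [← hsum p (le_of_lt hpq) i]
    exact (hcov i).2
  have hsfin : ∀ j : ℤ, s j ≠ ⊤ := by
    intro j
    have : s j ≤ 1 := by
      rw [← huniv]; exact measure_mono (Set.subset_univ _)
    exact ne_top_of_le_ne_top ENNReal.one_ne_top this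
  -- s is p-periodic
  have hsp : ∀ i : ℤ, s (i + p) = s i := by
    intro i
    obtain ⟨m, rfl⟩ : ∃ m, p = m + 1 := ⟨p - 1, by omega⟩
    have h1 := hblocks i
    have h2 := hblocks (i + 1)
    rw [Finset.sum_range_succ'] at h1
    rw [Finset.sum_range_succ] at h2
    have he : ∀ j ∈ Finset.range m, s (i + ((j+1 : ℕ):ℤ)) = s (i + 1 + j) := by
      intro j _
      congr 1
      push_cast
      ring
    rw [Finset.sum_congr rfl he] at h1
    have hT : (∑ j ∈ Finset.range m, s (i + 1 + (j:ℤ))) ≠ ⊤ :=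
      ne_top_of_le_ne_top ENNReal.ofReal_ne_top (h2 ▸ le_self_add)
    have h0 : s (i + ((0:ℕ):ℤ)) = s i := by norm_num
    rw [h0] at h1
    have hcomb : (∑ j ∈ Finset.range m, s (i + 1 + (j:ℤ))) + s i
        = (∑ j ∈ Finset.range m, s (i + 1 + (j:ℤ))) + s (i + 1 + m) := by
      rw [h1, h2]
    have hres := (ENNReal.add_right_inj hT).1 hcomb
    have hidx : i + ((m+1 : ℕ):ℤ) = i + 1 + (m:ℤ) := by push_cast; ring
    rw [hidx]
    exact hres.symm
  -- s is q-periodic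
  have hsq : ∀ i : ℤ, s (i + q) = s i := by
    intro i
    show myMass (Wedge O (θ (i + q)) (θ (i + q + 1))) = myMass (Wedge O (θ i) (θ (i+1)))
    rw [show i + (q:ℤ) + 1 = (i + 1) + q by ring, hper, hper, wedge_periodic]
  -- s is constant
  have hconst : ∀ j : ℤ, s j = s 0 := by
    have hpint := periodic_int hsp
    have hqint := periodic_int hsq
    have h1 : ∀ i : ℤ, s (i + 1) = s i := by
      intro i
      have hbz : (1:ℤ) = p * Nat.gcdA p q + q * Nat.gcdB p q := by
        have := Nat.gcd_eq_gcd_ab p q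
        rwa [hcop] at this
      calc s (i + 1) = s (i + ((p:ℤ) * Nat.gcdA p q + (q:ℤ) * Nat.gcdB p q)) := by rw [← hbz]
        _ = s ((i + Nat.gcdA p q * p) + Nat.gcdB p q * q) := by ring_nf
        _ = s (i + Nat.gcdA p q * p) := hqint _ _
        _ = s i := hpint _ _
    intro j
    have := periodic_int (d := 1) (fun i => h1 i) j 0
    simpa using this
  -- value of s
  have hval : ∀ j : ℤ, s j = ENNReal.ofReal (1/(q:ℝ)) := by
    have hb0 := hblocks 0
    have hcst : ∀ j ∈ Finset.range p, s (0 + (j:ℤ)) = s 0 := fun j _ => hconst _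
    rw [Finset.sum_congr rfl hcst, Finset.sum_const, Finset.card_range] at hb0
    have hmul : (p:ℝ≥0∞) * s 0 = (p:ℝ≥0∞) * ENNReal.ofReal (1/(q:ℝ)) := by
      rw [← nsmul_eq_mul, hb0]
      rw [← ENNReal.ofReal_natCast p, ← ENNReal.ofReal_mul (by positivity)]
      congr 1
      field_simp
    have hp0 : (p:ℝ≥0∞) ≠ 0 := Nat.cast_ne_zero.2 hp.ne'
    have hpt : (p:ℝ≥0∞) ≠ ⊤ := ENNReal.natCast_ne_top p
    have hs0 : s 0 = ENNReal.ofReal (1/(q:ℝ)) := by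
      have h' := congrArg (fun x => (p:ℝ≥0∞)⁻¹ * x) hmul
      simpa [← mul_assoc, ENNReal.inv_mul_cancel hp0 hpt] using h'
    intro j
    rw [hconst j]
    exact hs0
  -- choose the half-plane according to the position of O
  obtain ⟨t, hhalf⟩ : ∃ t : ℝ, myMass (Wedge O t (t + π)) ≤ ENNReal.ofReal (1/3) := by
    rcases le_or_gt 1 O.2 with hO2 | hO2
    · refine ⟨0, ?_⟩
      have : Wedge O 0 (0 + π) = {z : ℝ × ℝ | O.2 ≤ z.2} := by
        rw [wedge_halfplane O 0]
        ext z
        simp only [Set.mem_setOf_eq, Real.sin_zero, Real.cos_zero]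
        constructor
        · intro h; nlinarith
        · intro h; nlinarith
      rw [this]
      exact halfplane_case1 hO2
    rcases le_or_gt 1 O.1 with hO1 | hO1
    · refine ⟨-(π/2), ?_⟩
      have : Wedge O (-(π/2)) (-(π/2) + π) = {z : ℝ × ℝ | O.1 ≤ z.1} := by
        rw [wedge_halfplane O (-(π/2))]
        ext z
        simp only [Set.mem_setOf_eq, Real.sin_neg, Real.cos_neg, Real.sin_pi_div_two,
          Real.cos_pi_div_two]
        constructor
        · intro h; nlinarith
        · intro h; nlinarith
      rw [this]
      exact halfplane_case2 hO1
    · refine ⟨π - π/4, ?_⟩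
      have : Wedge O (π - π/4) (π - π/4 + π) = {z : ℝ × ℝ | z.1 + z.2 ≤ O.1 + O.2} := by
        rw [wedge_halfplane O (π - π/4)]
        ext z
        simp only [Set.mem_setOf_eq, Real.sin_pi_sub, Real.cos_pi_sub, Real.sin_pi_div_four,
          Real.cos_pi_div_four]
        have hs2 : 0 < Real.sqrt 2 / 2 := by positivity
        constructor
        · intro h; nlinarith
        · intro h; nlinarith
      rw [this]
      exact halfplane_case3 (by linarith)
  -- find the last cut before t
  obtain ⟨i, hit, hmax⟩ : ∃ i : ℤ, θ i ≤ t ∧ ∀ z : ℤ, θ z ≤ t → z ≤ i := by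
    have hex : ∃ z : ℤ, θ z ≤ t := by
      obtain ⟨n, hn⟩ := exists_nat_ge ((θ 0 - t) / (2*π))
      refine ⟨(-(n:ℤ)) * q, ?_⟩
      have := hshift (-(n:ℤ)) 0
      rw [zero_add] at this
      rw [this]
      have : (θ 0 - t) ≤ n * (2*π) := by
        rw [div_le_iff₀ (by positivity)] at hn
        linarith
      push_cast
      linarith
    have hbdd : ∃ b : ℤ, ∀ z : ℤ, θ z ≤ t → z ≤ b := by
      obtain ⟨n, hn⟩ := exists_nat_ge ((t - θ 0) / (2*π) + 1)
      refine ⟨(n:ℤ) * q, ?_⟩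
      intro z hz
      by_contra hzgt
      push_neg at hzgt
      have h1 : θ ((n:ℤ) * q) ≤ θ z := hmono _ _ (le_of_lt hzgt)
      have h2 := hshift (n:ℤ) 0
      rw [zero_add] at h2
      have h3 : (t - θ 0) / (2*π) + 1 ≤ n := hn
      have h4 : t - θ 0 ≤ ((n:ℝ) - 1) * (2*π) := by
        have : (t - θ 0) / (2*π) ≤ (n:ℝ) - 1 := by linarith
        rw [div_le_iff₀ (by positivity)] at this
        linarith
      have h5 : θ ((n:ℤ) * q) = θ 0 + n * (2*π) := h2
      push_cast at h5
      nlinarith [hπ]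
    obtain ⟨i, hi, hub⟩ := Int.exists_greatest_of_bdd (hbdd.imp (fun b hb => hb)) hex
    exact ⟨i, hi, hub⟩
  have hnext : t < θ (i + 1) := by
    by_contra hle
    push_neg at hle
    have := hmax (i+1) hle
    omega
  -- the final chain of inequalities
  have hchain : ENNReal.ofReal ((p:ℝ)/(q:ℝ)) ≤ ENNReal.ofReal (1/(q:ℝ)) + ENNReal.ofReal (1/3) := by
    have e1 : myMass (Wedge O (θ i) (θ (i + p))) = ENNReal.ofReal ((p:ℝ)/(q:ℝ)) := (hcov i).2
    have hsub : Wedge O (θ i) (θ (i + p)) ⊆ Wedge O (θ i) t ∪ Wedge O t (t + π) := by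
      intro x hx
      have hx2 : x ∈ Wedge O (θ i) (t + π) :=
        wedge_mono le_rfl (le_trans (hspanπ i) (by linarith [hit])) hx
      rw [wedge_union hit (by linarith)] at hx2
      exact hx2
    calc ENNReal.ofReal ((p:ℝ)/(q:ℝ)) = myMass (Wedge O (θ i) (θ (i + p))) := e1.symm
      _ ≤ myMass (Wedge O (θ i) t) + myMass (Wedge O t (t + π)) :=
          le_trans (measure_mono hsub) (measure_union_le _ _)
      _ ≤ myMass (Wedge O (θ i) (θ (i+1))) + ENNReal.ofReal (1/3) := by
          apply add_le_add _ hhalf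
          exact measure_mono (wedge_mono le_rfl (le_of_lt hnext))
      _ = ENNReal.ofReal (1/(q:ℝ)) + ENNReal.ofReal (1/3) := by
          rw [show myMass (Wedge O (θ i) (θ (i+1))) = ENNReal.ofReal (1/(q:ℝ)) from hval i]
  rw [← ENNReal.ofReal_add (by positivity) (by norm_num)] at hchain
  have hreal : (p:ℝ)/(q:ℝ) ≤ 1/(q:ℝ) + 1/3 :=
    (ENNReal.ofReal_le_ofReal_iff (by positivity)).1 hchain
  have hfin : (3:ℝ) * p ≤ 3 + q := by
    have h1 : ((p:ℝ)/q) * q = p := div_mul_cancel₀ _ (ne_of_gt hq0)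
    have h2 : ((1:ℝ)/q) * q = 1 := div_mul_cancel₀ _ (ne_of_gt hq0)
    nlinarith [mul_le_mul_of_nonneg_right hreal (le_of_lt hq0)]
  have : (q:ℝ) + 3 < 3 * p := by exact_mod_cast h3
  linarith


/-- If `p < q < 3p - 3` with `p, q` coprime, some mass admits no `(q,p)`-spiral
equicovering. -/
theorem exists_mass_no_spiral_equicovering_of_q_lt_three_p_sub_three (p q : ℕ)
    (hp : 0 < p) (hpq : p < q) (h3 : q + 3 < 3 * p) (hcop : Nat.Coprime p q) :
    ∃ μ : Measure (ℝ × ℝ), IsMass μ ∧ ¬ IsSpiralEquicovering μ q p :=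
  ⟨myMass, ⟨myMass_prob, fun _ hL => myMass_line_null hL⟩, main_technical p q hp hpq h3 hcop⟩
end
end

section
/- Let μ be a mass on ℝ², let O ∈ ℝ² be any point, let θ_1 ∈ ℝ be any angle, and let q be a positive integer. Then there exist angles θ_1 ≤ θ_2 ≤ ⋯ ≤ θ_q ≤ θ_{q+1} = θ_1 + 2π such that μ(W(O, θ_i, θ_{i+1})) = 1/q for every i = 1, …, q. -/
open MeasureTheory

noncomputable section

open Real Set

/-- The angle of `x` as seen from `O`, normalized to lie in `(θ₁, θ₁ + 2π]`. -/
noncomputable def BCA (O : ℝ × ℝ) (θ₁ : ℝ) (x : ℝ × ℝ) : ℝ :=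
  toIocMod Real.two_pi_pos θ₁ (Complex.arg ((x.1 - O.1 : ℝ) + (x.2 - O.2 : ℝ) * Complex.I))

lemma measurable_BCA (O : ℝ × ℝ) (θ₁ : ℝ) : Measurable (BCA O θ₁) := by
  have h1 : Measurable fun x : ℝ × ℝ =>
      ((x.1 - O.1 : ℝ) + (x.2 - O.2 : ℝ) * Complex.I : ℂ) := by
    apply Measurable.add
    · exact Complex.measurable_ofReal.comp (measurable_fst.sub measurable_const)
    · exact (Complex.measurable_ofReal.comp (measurable_snd.sub measurable_const)).mul_const _
  have h2 : Measurable fun y : ℝ => toIocMod Real.two_pi_pos θ₁ y := by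
    have heq : (fun y : ℝ => toIocMod Real.two_pi_pos θ₁ y)
        = fun y : ℝ => y - (-(⌊(θ₁ + 2 * π - y) / (2 * π)⌋ : ℤ) : ℝ) * (2 * π) := by
      funext y
      rw [toIocMod, toIocDiv_eq_neg_floor]
      simp only [zsmul_eq_mul]
      push_cast
      ring
    rw [heq]
    apply Measurable.sub measurable_id
    apply Measurable.mul_const
    apply Measurable.neg
    apply Measurable.comp (f := fun y : ℝ => (⌊(θ₁ + 2 * π - y) / (2 * π)⌋ : ℤ))
      (g := fun n : ℤ => (n : ℝ))
    · exact measurable_from_top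
    · exact ((measurable_const.sub measurable_id).div_const _).floor
  exact h2.comp (Complex.measurable_arg.comp h1)

lemma BCA_mem (O : ℝ × ℝ) (θ₁ : ℝ) (x : ℝ × ℝ) : BCA O θ₁ x ∈ Set.Ioc θ₁ (θ₁ + 2 * π) :=
  toIocMod_mem_Ioc Real.two_pi_pos θ₁ _

/-- Every point other than the apex lies on the ray of its angle. -/
lemma BCA_rep (O : ℝ × ℝ) (θ₁ : ℝ) {x : ℝ × ℝ} (hx : x ≠ O) :
    ∃ r : ℝ, 0 < r ∧ x = O + r • (Real.cos (BCA O θ₁ x), Real.sin (BCA O θ₁ x)) := by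
  set z : ℂ := ((x.1 - O.1 : ℝ) + (x.2 - O.2 : ℝ) * Complex.I) with hz
  have hzre : z.re = x.1 - O.1 := by simp [hz]
  have hzim : z.im = x.2 - O.2 := by simp [hz]
  have hz0 : z ≠ 0 := by
    intro h
    apply hx
    have h1 : x.1 - O.1 = 0 := by rw [← hzre, h]; simp
    have h2 : x.2 - O.2 = 0 := by rw [← hzim, h]; simp
    exact Prod.ext (by linarith) (by linarith)
  have hr : 0 < ‖z‖ := norm_pos_iff.mpr hz0
  have hcos : Real.cos (BCA O θ₁ x) = Real.cos (Complex.arg z) := by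
    have : (BCA O θ₁ x) = Complex.arg z - toIocDiv Real.two_pi_pos θ₁ (Complex.arg z) • (2 * π) := rfl
    rw [this, Real.cos_periodic.sub_zsmul_eq]
  have hsin : Real.sin (BCA O θ₁ x) = Real.sin (Complex.arg z) := by
    have : (BCA O θ₁ x) = Complex.arg z - toIocDiv Real.two_pi_pos θ₁ (Complex.arg z) • (2 * π) := rfl
    rw [this, Real.sin_periodic.sub_zsmul_eq]
  refine ⟨‖z‖, hr, ?_⟩
  have h1 : ‖z‖ * Real.cos (Complex.arg z) = x.1 - O.1 := by
    rw [Complex.cos_arg hz0, hzre]; field_simp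
  have h2 : ‖z‖ * Real.sin (Complex.arg z) = x.2 - O.2 := by
    rw [Complex.sin_arg, hzim]; field_simp
  apply Prod.ext
  · simp only [Prod.fst_add, Prod.smul_fst, smul_eq_mul, hcos]
    linarith [h1]
  · simp only [Prod.snd_add, Prod.smul_snd, smul_eq_mul, hsin]
    linarith [h2]

/-- The angle of a point given in polar form. -/
lemma BCA_eq (O : ℝ × ℝ) (θ₁ : ℝ) {r θ : ℝ} (hr : 0 < r) :
    BCA O θ₁ (O + r • (Real.cos θ, Real.sin θ)) = toIocMod Real.two_pi_pos θ₁ θ := by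
  set x := O + r • (Real.cos θ, Real.sin θ) with hx
  have h1 : (x.1 - O.1 : ℝ) = r * Real.cos θ := by simp [hx]
  have h2 : (x.2 - O.2 : ℝ) = r * Real.sin θ := by simp [hx]
  have hz : ((x.1 - O.1 : ℝ) + (x.2 - O.2 : ℝ) * Complex.I : ℂ)
      = (r : ℂ) * Complex.exp (θ * Complex.I) := by
    rw [Complex.exp_mul_I, h1, h2]
    push_cast
    ring
  unfold BCA
  rw [hz, Complex.arg_real_mul _ hr, Complex.arg_exp_mul_I]
  have : toIocMod (mul_pos two_pos Real.pi_pos) (-π) θ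
      = θ - toIocDiv (mul_pos two_pos Real.pi_pos) (-π) θ • (2 * π) := rfl
  rw [this, toIocMod_sub_zsmul]

lemma cos_sin_ne_zero' (θ : ℝ) : ((Real.cos θ, Real.sin θ) : ℝ × ℝ) ≠ 0 := by
  intro h
  have h1 : Real.cos θ = 0 := congrArg Prod.fst h
  have h2 : Real.sin θ = 0 := congrArg Prod.snd h
  have h3 := Real.sin_sq_add_cos_sq θ
  rw [h1, h2] at h3
  norm_num at h3

/-- The basic construction: starting from any point `O` and any initial angle `θ₁`, one
can choose angles so that the `q` consecutive wedges around `O` each have μ-measure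
`1/q`. -/
theorem basic_construction (μ : Measure (ℝ × ℝ)) (hμ : IsMass μ) (O : ℝ × ℝ) (θ₁ : ℝ)
    (q : ℕ) (hq : 0 < q) :
    ∃ θ : ℕ → ℝ, θ 1 = θ₁ ∧ θ (q + 1) = θ₁ + 2 * Real.pi ∧
      (∀ i : ℕ, 1 ≤ i → i ≤ q → θ i ≤ θ (i + 1)) ∧
      (∀ i : ℕ, 1 ≤ i → i ≤ q →
        μ (Wedge O (θ i) (θ (i + 1))) = ENNReal.ofReal (1 / (q : ℝ))) := by
  obtain ⟨hprob, hline⟩ := hμ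
  have hπ := Real.pi_pos
  have hAmeas := measurable_BCA O θ₁
  haveI : IsProbabilityMeasure μ := hprob
  -- rays are null
  have hray : ∀ φ : ℝ, μ {x | ∃ t : ℝ, x = O + t • (Real.cos φ, Real.sin φ)} = 0 := fun φ =>
    hline _ ⟨O, (Real.cos φ, Real.sin φ), cos_sin_ne_zero' φ, rfl⟩
  -- the pushforward measure on angles and its cdf
  set ν : Measure ℝ := μ.map (BCA O θ₁) with hν
  haveI hνprob : IsProbabilityMeasure ν := Measure.isProbabilityMeasure_map hAmeas.aemeasurable
  have hmap : ∀ t : ℝ, ν (Iic t) = μ {x | BCA O θ₁ x ≤ t} := fun t =>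
    Measure.map_apply hAmeas measurableSet_Iic
  have hatom : ∀ t : ℝ, ν {t} = 0 := by
    intro t
    rw [hν, Measure.map_apply hAmeas (measurableSet_singleton t)]
    refine measure_mono_null ?_ (hray t)
    intro x hx
    rcases eq_or_ne x O with rfl | hxO
    · exact ⟨0, by simp⟩
    · obtain ⟨r, hr, hrep⟩ := BCA_rep O θ₁ hxO
      have hxt : BCA O θ₁ x = t := hx
      exact ⟨r, by rwa [hxt] at hrep⟩
  set f := ProbabilityTheory.cdf ν with hf
  have hmono : Monotone f := ProbabilityTheory.monotone_cdf ν
  have hofReal : ∀ t : ℝ, ENNReal.ofReal (f t) = μ {x | BCA O θ₁ x ≤ t} := fun t => by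
    rw [hf, ProbabilityTheory.ofReal_cdf, hmap]
  -- continuity of the cdf
  have hcont : Continuous f := by
    rw [continuous_iff_continuousAt]
    intro a
    rw [hmono.continuousAt_iff_leftLim_eq_rightLim]
    have hr : Function.rightLim f a = f a :=
      hmono.continuousWithinAt_Ioi_iff_rightLim_eq.1
        ((f.right_continuous a).mono Ioi_subset_Ici_self)
    have hl : Function.leftLim f a = f a := by
      have hs := f.measure_singleton a
      rw [hf, ProbabilityTheory.measure_cdf, hatom a] at hs
      have h1 : f a - Function.leftLim f a ≤ 0 := ENNReal.ofReal_eq_zero.mp hs.symm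
      have h2 : Function.leftLim f a ≤ f a := hmono.leftLim_le le_rfl
      linarith
    rw [hl, hr]
  -- endpoint values
  have hA_gt : ∀ x, θ₁ < BCA O θ₁ x := fun x => (BCA_mem O θ₁ x).1
  have hA_le : ∀ x, BCA O θ₁ x ≤ θ₁ + 2 * π := fun x => (BCA_mem O θ₁ x).2
  have hf0 : f θ₁ = 0 := by
    have h0 : μ {x | BCA O θ₁ x ≤ θ₁} = 0 := by
      rw [show {x | BCA O θ₁ x ≤ θ₁} = (∅ : Set (ℝ × ℝ)) by
        ext x; simpa using (hA_gt x).not_ge]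
      exact measure_empty
    have h := hofReal θ₁
    rw [h0, ENNReal.ofReal_eq_zero] at h
    exact le_antisymm h (ProbabilityTheory.cdf_nonneg ν θ₁)
  have hf1 : f (θ₁ + 2 * π) = 1 := by
    have h1 : μ {x | BCA O θ₁ x ≤ θ₁ + 2 * π} = 1 := by
      rw [show {x | BCA O θ₁ x ≤ θ₁ + 2 * π} = (univ : Set (ℝ × ℝ)) from
        eq_univ_of_forall hA_le]
      exact measure_univ
    have h := hofReal (θ₁ + 2 * π)
    rw [h1] at h
    exact ENNReal.ofReal_eq_one.mp h
  -- intermediate value theorem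
  have hq' : (0 : ℝ) < q := Nat.cast_pos.mpr hq
  have hIVT : ∀ i : ℕ, ∃ β ∈ Icc θ₁ (θ₁ + 2 * π), f β = ((min i q : ℕ) : ℝ) / q := by
    intro i
    have hle : θ₁ ≤ θ₁ + 2 * π := by linarith
    have h := intermediate_value_Icc hle hcont.continuousOn
    rw [hf0, hf1] at h
    have hc : ((min i q : ℕ) : ℝ) / q ∈ Icc (0 : ℝ) 1 := by
      constructor
      · positivity
      · rw [div_le_one hq']
        exact_mod_cast Nat.cast_le.mpr (min_le_right i q)
    obtain ⟨β, hβ, hfβ⟩ := h hc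
    exact ⟨β, hβ, hfβ⟩
  choose β hβmem hβval using hIVT
  -- the angles
  set θ : ℕ → ℝ := fun i => if i ≤ 1 then θ₁ else if q + 1 ≤ i then θ₁ + 2 * π else β (i - 1)
    with hθdef
  have hθ1 : θ 1 = θ₁ := by simp [hθdef]
  have hθtop : θ (q + 1) = θ₁ + 2 * π := by
    simp only [hθdef]
    rw [if_neg (by omega), if_pos le_rfl]
  have hval : ∀ i : ℕ, 1 ≤ i → i ≤ q + 1 →
      θ i ∈ Icc θ₁ (θ₁ + 2 * π) ∧ f (θ i) = ((i : ℝ) - 1) / q := by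
    intro i h1 h2
    by_cases hi1 : i ≤ 1
    · have hieq : i = 1 := le_antisymm hi1 h1
      subst hieq
      simp only [hθdef, if_pos le_rfl]
      refine ⟨⟨le_rfl, by linarith⟩, ?_⟩
      rw [hf0]
      norm_num
    · by_cases hi2 : q + 1 ≤ i
      · have hieq : i = q + 1 := le_antisymm h2 hi2
        subst hieq
        simp only [hθdef, if_neg hi1, if_pos le_rfl]
        refine ⟨⟨by linarith, le_rfl⟩, ?_⟩
        rw [hf1, eq_div_iff hq'.ne']
        push_cast
        ring
      · simp only [hθdef, if_neg hi1, if_neg hi2]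
        have hmin : min (i - 1) q = i - 1 := by omega
        refine ⟨hβmem (i - 1), ?_⟩
        rw [hβval (i - 1), hmin, Nat.cast_sub h1, Nat.cast_one]
  have hmono' : ∀ i : ℕ, 1 ≤ i → i ≤ q → θ i ≤ θ (i + 1) := by
    intro i h1 h2
    by_contra h
    push_neg at h
    have hfle := hmono h.le
    have e1 := (hval i h1 (by omega)).2
    have e2 := (hval (i + 1) (by omega) (by omega)).2
    rw [e1, e2] at hfle
    have hmul := mul_le_mul_of_nonneg_right hfle hq'.le
    rw [div_mul_cancel₀ _ hq'.ne', div_mul_cancel₀ _ hq'.ne'] at hmul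
    push_cast at hmul
    linarith
  -- measure of wedges
  have hwedge : ∀ a b : ℝ, θ₁ ≤ a → a ≤ b → b ≤ θ₁ + 2 * π →
      μ (Wedge O a b) = ENNReal.ofReal (f b) - ENNReal.ofReal (f a) := by
    intro a b ha hab hb
    have hsub1 : {x | a < BCA O θ₁ x ∧ BCA O θ₁ x ≤ b} ⊆ Wedge O a b := by
      rintro x ⟨hxa, hxb⟩
      rcases eq_or_ne x O with rfl | hxO
      · exact Or.inl rfl
      · obtain ⟨r, hr, hrep⟩ := BCA_rep O θ₁ hxO
        exact Or.inr ⟨r, hr, BCA O θ₁ x, ⟨hxa.le, hxb⟩, hrep⟩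
    have hsub2 : Wedge O a b ⊆ {x | a < BCA O θ₁ x ∧ BCA O θ₁ x ≤ b}
        ∪ ({x | ∃ t : ℝ, x = O + t • (Real.cos θ₁, Real.sin θ₁)}
          ∪ {x | ∃ t : ℝ, x = O + t • (Real.cos a, Real.sin a)}) := by
      rintro x (rfl | ⟨r, hr, φ, ⟨hφa, hφb⟩, rfl⟩)
      · exact Or.inr (Or.inl ⟨0, by simp⟩)
      · have hAx := BCA_eq O θ₁ (θ := φ) hr
        rcases eq_or_lt_of_le (ha.trans hφa) with hφ1 | hφ1
        · exact Or.inr (Or.inl ⟨r, by rw [← hφ1]⟩)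
        · have hself : toIocMod Real.two_pi_pos θ₁ φ = φ :=
            (toIocMod_eq_self _).2 ⟨hφ1, hφb.trans hb⟩
          rcases eq_or_lt_of_le hφa with hφa' | hφa'
          · exact Or.inr (Or.inr ⟨r, by rw [hφa']⟩)
          · refine Or.inl ⟨?_, ?_⟩
            · rw [hAx, hself]; exact hφa'
            · rw [hAx, hself]; exact hφb
    have hmid : μ (Wedge O a b) = μ {x | a < BCA O θ₁ x ∧ BCA O θ₁ x ≤ b} := by
      refine le_antisymm ?_ (measure_mono hsub1)
      calc μ (Wedge O a b) ≤ μ ({x | a < BCA O θ₁ x ∧ BCA O θ₁ x ≤ b}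
            ∪ ({x | ∃ t : ℝ, x = O + t • (Real.cos θ₁, Real.sin θ₁)}
              ∪ {x | ∃ t : ℝ, x = O + t • (Real.cos a, Real.sin a)})) := measure_mono hsub2
        _ ≤ μ {x | a < BCA O θ₁ x ∧ BCA O θ₁ x ≤ b}
            + μ ({x | ∃ t : ℝ, x = O + t • (Real.cos θ₁, Real.sin θ₁)}
              ∪ {x | ∃ t : ℝ, x = O + t • (Real.cos a, Real.sin a)}) := measure_union_le _ _
        _ = μ {x | a < BCA O θ₁ x ∧ BCA O θ₁ x ≤ b} := by
            rw [measure_union_null (hray θ₁) (hray a), add_zero]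
    have hdiff : {x | a < BCA O θ₁ x ∧ BCA O θ₁ x ≤ b}
        = {x | BCA O θ₁ x ≤ b} \ {x | BCA O θ₁ x ≤ a} := by
      ext x
      simp only [mem_setOf_eq, mem_diff, not_le]
      tauto
    have hsub3 : {x | BCA O θ₁ x ≤ a} ⊆ {x | BCA O θ₁ x ≤ b} := fun x hx => le_trans hx hab
    have hms : NullMeasurableSet {x | BCA O θ₁ x ≤ a} μ :=
      (hAmeas measurableSet_Iic : MeasurableSet {x | BCA O θ₁ x ≤ a}).nullMeasurableSet
    rw [hmid, hdiff, measure_diff hsub3 hms (measure_ne_top μ _), hofReal, hofReal]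
  -- conclusion
  refine ⟨θ, hθ1, hθtop, hmono', ?_⟩
  intro i h1 h2
  obtain ⟨⟨hai, _⟩, ei⟩ := hval i h1 (by omega)
  obtain ⟨⟨_, hbi⟩, ei1⟩ := hval (i + 1) (by omega) (by omega)
  rw [hwedge (θ i) (θ (i + 1)) hai (hmono' i h1 h2) hbi, ei, ei1]
  have h1R : (1 : ℝ) ≤ (i : ℝ) := by exact_mod_cast h1
  rw [← ENNReal.ofReal_sub _ (div_nonneg (by linarith) hq'.le)]
  congr 1
  push_cast
  field_simp
  ring

end
end

section
/- Let μ be a mass on ℝ² and let ℓ be an affine line whose two closed half-planes H⁺ and H⁻ satisfy μ(H⁺) = μ(H⁻) = 1/2. Then there exists an affine line ℓ′ whose two closed half-planes K⁺ and K⁻ satisfy μ(H⁺ ∩ K⁺) = 3/8, μ(H⁺ ∩ K⁻) = 1/8, μ(H⁻ ∩ K⁺) = 1/4, and μ(H⁻ ∩ K⁻) = 1/4. -/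
open MeasureTheory Filter Topology ENNReal

noncomputable section

def dt (b x : ℝ × ℝ) : ℝ := b.1 * x.1 + b.2 * x.2

lemma continuous_dt (b : ℝ × ℝ) : Continuous (dt b) := by
  unfold dt; fun_prop

lemma prod_ne_zero_iff {b : ℝ × ℝ} : b ≠ 0 ↔ b.1 ≠ 0 ∨ b.2 ≠ 0 := by
  rw [Ne, Prod.ext_iff, not_and_or]; simp

lemma sq_sum_pos {b : ℝ × ℝ} (hb : b ≠ 0) : 0 < b.1 ^ 2 + b.2 ^ 2 := by
  rcases prod_ne_zero_iff.mp hb with h1 | h1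
  · positivity
  · positivity

lemma isAffineLine_dt (b : ℝ × ℝ) (hb : b ≠ 0) (d : ℝ) :
    IsAffineLine {x | dt b x = d} := by
  have hn := sq_sum_pos hb
  refine ⟨(d * b.1 / (b.1 ^ 2 + b.2 ^ 2), d * b.2 / (b.1 ^ 2 + b.2 ^ 2)), (-b.2, b.1), ?_, ?_⟩
  · intro h
    apply hb
    have h1 : -b.2 = (0 : ℝ) := by simpa using congrArg Prod.fst h
    have h2 : b.1 = (0 : ℝ) := by simpa using congrArg Prod.snd h
    rw [prod_ne_zero_iff] at hb
    simp [h2, neg_eq_zero.mp h1] at hb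
  · ext x
    simp only [Set.mem_setOf_eq, dt]
    constructor
    · intro hx
      refine ⟨(b.1 * x.2 - b.2 * x.1) / (b.1 ^ 2 + b.2 ^ 2), ?_⟩
      have e1 : x.1 = d * b.1 / (b.1 ^ 2 + b.2 ^ 2) +
          (b.1 * x.2 - b.2 * x.1) / (b.1 ^ 2 + b.2 ^ 2) * (-b.2) := by
        field_simp
        linear_combination b.1 * hx
      have e2 : x.2 = d * b.2 / (b.1 ^ 2 + b.2 ^ 2) +
          (b.1 * x.2 - b.2 * x.1) / (b.1 ^ 2 + b.2 ^ 2) * b.1 := by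
        field_simp
        linear_combination b.2 * hx
      apply Prod.ext
      · simpa using e1
      · simpa using e2
    · rintro ⟨t, rfl⟩
      simp only [Prod.fst_add, Prod.snd_add, Prod.smul_fst, Prod.smul_snd, smul_eq_mul]
      field_simp
      ring

lemma mass_line {μ : Measure (ℝ × ℝ)} (hμ : IsMass μ) {b : ℝ × ℝ} (hb : b ≠ 0) (d : ℝ) :
    μ {x | dt b x = d} = 0 :=
  hμ.2 _ (isAffineLine_dt b hb d)

lemma meas_half (b : ℝ × ℝ) (d : ℝ) : MeasurableSet {x : ℝ × ℝ | d ≤ dt b x} :=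
  measurableSet_le measurable_const (continuous_dt b).measurable

lemma key_tendsto (μ : Measure (ℝ × ℝ)) [IsProbabilityMeasure μ]
    (S : Set (ℝ × ℝ)) (hS : MeasurableSet S)
    (bs : ℕ → ℝ × ℝ) (b : ℝ × ℝ) (hbs : Tendsto bs atTop (𝓝 b))
    (ds : ℕ → ℝ) (d : ℝ) (hds : Tendsto ds atTop (𝓝 d))
    (hline : μ {x | dt b x = d} = 0) :
    Tendsto (fun n => μ (S ∩ {x | ds n ≤ dt (bs n) x})) atTop
      (𝓝 (μ (S ∩ {x | d ≤ dt b x}))) := by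
  have hmeas : ∀ n, MeasurableSet (S ∩ {x | ds n ≤ dt (bs n) x}) :=
    fun n => hS.inter (meas_half _ _)
  have hmeas' : MeasurableSet (S ∩ {x | d ≤ dt b x}) := hS.inter (meas_half _ _)
  rw [← lintegral_indicator_one hmeas']
  have hrw : (fun n => μ (S ∩ {x | ds n ≤ dt (bs n) x})) =
      fun n => ∫⁻ x, (S ∩ {x | ds n ≤ dt (bs n) x}).indicator 1 x ∂μ := by
    funext n; rw [lintegral_indicator_one (hmeas n)]
  rw [hrw]
  apply tendsto_lintegral_of_dominated_convergence (fun _ => (1 : ℝ≥0∞))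
    (fun n => measurable_const.indicator (hmeas n))
    (fun n => Filter.Eventually.of_forall (fun x => by
      classical
      simp only [Set.indicator_apply]
      exact Set.indicator_le (fun _ _ => le_rfl) x))
    (by simp)
  have hae : ∀ᵐ x ∂μ, dt b x ≠ d := by
    rw [ae_iff]
    simpa using hline
  filter_upwards [hae] with x hx
  have hdx : Tendsto (fun n => dt (bs n) x) atTop (𝓝 (dt b x)) := by
    have hc : Continuous fun p : ℝ × ℝ => dt p x := by unfold dt; fun_prop
    exact (hc.tendsto b).comp hbs
  rcases lt_or_gt_of_ne hx with hlt | hgt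
  · have hev : ∀ᶠ n in atTop, dt (bs n) x < ds n := by
      have hsub : Tendsto (fun n => ds n - dt (bs n) x) atTop (𝓝 (d - dt b x)) :=
        hds.sub hdx
      have := hsub.eventually (eventually_gt_nhds (sub_pos.mpr hlt))
      filter_upwards [this] with n hn
      linarith
    have hx0 : x ∉ S ∩ {x | d ≤ dt b x} := fun hmem => absurd hmem.2 (not_le.mpr hlt)
    rw [Set.indicator_of_notMem hx0]
    apply Tendsto.congr' _ tendsto_const_nhds
    filter_upwards [hev] with n hn
    exact (Set.indicator_of_notMem (fun hmem => absurd hmem.2 (not_le.mpr hn)) _).symm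
  · have hev : ∀ᶠ n in atTop, ds n ≤ dt (bs n) x := by
      have hsub : Tendsto (fun n => dt (bs n) x - ds n) atTop (𝓝 (dt b x - d)) :=
        hdx.sub hds
      have := hsub.eventually (eventually_gt_nhds (sub_pos.mpr hgt))
      filter_upwards [this] with n hn
      linarith
    apply Tendsto.congr' _ tendsto_const_nhds
    filter_upwards [hev] with n hn
    classical
    by_cases hxS : x ∈ S
    · simp [Set.indicator_apply, Set.mem_inter_iff, Set.mem_setOf_eq, hxS, hgt.le, hn]
    · simp [Set.indicator_apply, Set.mem_inter_iff, hxS]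

lemma measure_inter_congr (μ : Measure (ℝ × ℝ)) [IsProbabilityMeasure μ]
    (S : Set (ℝ × ℝ)) {b : ℝ × ℝ} {d d' : ℝ} {v : ℝ≥0∞}
    (h : μ {x | d ≤ dt b x} = v) (h' : μ {x | d' ≤ dt b x} = v) :
    μ (S ∩ {x | d ≤ dt b x}) = μ (S ∩ {x | d' ≤ dt b x}) := by
  have key : ∀ e e' : ℝ, e ≤ e' → μ {x | e ≤ dt b x} = v → μ {x | e' ≤ dt b x} = v →
      μ (S ∩ {x | e ≤ dt b x}) ≤ μ (S ∩ {x | e' ≤ dt b x}) := by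
    intro e e' hee he he'
    have hsub : {x : ℝ × ℝ | e' ≤ dt b x} ⊆ {x | e ≤ dt b x} :=
      fun x hx => le_trans hee hx
    have hdiff : μ ({x | e ≤ dt b x} \ {x | e' ≤ dt b x}) = 0 := by
      rw [measure_diff hsub (meas_half b e').nullMeasurableSet (measure_ne_top μ _),
        he, he', tsub_self]
    calc μ (S ∩ {x | e ≤ dt b x})
        ≤ μ ((S ∩ {x | e' ≤ dt b x}) ∪ ({x | e ≤ dt b x} \ {x | e' ≤ dt b x})) := by
          apply measure_mono
          rintro x ⟨hxS, hxe⟩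
          by_cases hxe' : e' ≤ dt b x
          · exact Or.inl ⟨hxS, hxe'⟩
          · exact Or.inr ⟨hxe, hxe'⟩
      _ ≤ μ (S ∩ {x | e' ≤ dt b x}) + μ ({x | e ≤ dt b x} \ {x | e' ≤ dt b x}) :=
          measure_union_le _ _
      _ = μ (S ∩ {x | e' ≤ dt b x}) := by rw [hdiff, add_zero]
  rcases le_total d d' with hdd | hdd
  · exact le_antisymm (key d d' hdd h h')
      (measure_mono (Set.inter_subset_inter_right _ (fun x hx => le_trans hdd hx)))
  · exact (le_antisymm (key d' d hdd h' h)
      (measure_mono (Set.inter_subset_inter_right _ (fun x hx => le_trans hdd hx)))).symm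

lemma exists_cut (μ : Measure (ℝ × ℝ)) (hμ : IsMass μ) (M B : ℝ) (hB : 0 ≤ B)
    (hM : ENNReal.ofReal (5 / 8) < μ (Metric.closedBall 0 M))
    (b : ℝ × ℝ) (hb : b ≠ 0) (hb1 : |b.1| ≤ B) (hb2 : |b.2| ≤ B) :
    ∃ d ∈ Set.Icc (-(2 * B * M + 1)) (2 * B * M + 1),
      μ {x | d ≤ dt b x} = ENNReal.ofReal (5 / 8) := by
  haveI := hμ.1
  have hM0 : 0 ≤ M := by
    by_contra hM0
    rw [Metric.closedBall_eq_empty.mpr (by linarith)] at hM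
    simp at hM
  set K : ℝ := 2 * B * M + 1 with hK
  have hK0 : 0 < K := by positivity
  have hballbound : ∀ x ∈ Metric.closedBall (0 : ℝ × ℝ) M, |dt b x| ≤ 2 * B * M := by
    intro x hx
    rw [Metric.mem_closedBall, dist_zero_right, Prod.norm_def] at hx
    have h1 : |x.1| ≤ M := le_trans (le_max_left _ _) hx
    have h2 : |x.2| ≤ M := le_trans (le_max_right _ _) hx
    calc |dt b x| ≤ |b.1 * x.1| + |b.2 * x.2| := abs_add_le _ _
      _ = |b.1| * |x.1| + |b.2| * |x.2| := by rw [abs_mul, abs_mul]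
      _ ≤ 2 * B * M := by
          nlinarith [abs_nonneg x.1, abs_nonneg x.2, abs_nonneg b.1, abs_nonneg b.2]
  have hsub1 : Metric.closedBall (0 : ℝ × ℝ) M ⊆ {x | -K ≤ dt b x} := by
    intro x hx
    have := hballbound x hx
    have := abs_le.mp this
    simp only [Set.mem_setOf_eq, hK]
    linarith [this.1]
  have hsub2 : {x : ℝ × ℝ | K ≤ dt b x} ⊆ (Metric.closedBall (0 : ℝ × ℝ) M)ᶜ := by
    intro x hx hball
    have := abs_le.mp (hballbound x hball)
    have hx' : K ≤ dt b x := hx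
    rw [hK] at hx'
    linarith [this.2]
  set g : ℝ → ℝ := fun d => (μ {x | d ≤ dt b x}).toReal with hg
  have hgc : Continuous g := by
    apply SeqContinuous.continuous
    intro ds d hds
    have := key_tendsto μ Set.univ MeasurableSet.univ (fun _ => b) b tendsto_const_nhds
      ds d hds (mass_line hμ hb d)
    simp only [Set.univ_inter] at this
    exact (ENNReal.tendsto_toReal (measure_ne_top μ _)).comp this
  have hball_toReal : 5 / 8 < (μ (Metric.closedBall 0 M)).toReal := by
    rw [← ENNReal.ofReal_lt_iff_lt_toReal (by norm_num) (measure_ne_top μ _)]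
    exact hM
  have hgneg : 5 / 8 ≤ g (-K) := by
    have := measure_mono (μ := μ) hsub1
    have h' := ENNReal.toReal_mono (measure_ne_top μ _) this
    exact le_trans hball_toReal.le h'
  have hgpos : g K ≤ 5 / 8 := by
    have hmle : μ {x | K ≤ dt b x} ≤ μ (Metric.closedBall (0 : ℝ × ℝ) M)ᶜ :=
      measure_mono hsub2
    have hcompl : μ (Metric.closedBall (0 : ℝ × ℝ) M)ᶜ = 1 - μ (Metric.closedBall 0 M) :=
      prob_compl_eq_one_sub Metric.isClosed_closedBall.measurableSet
    have h' := ENNReal.toReal_mono (by rw [hcompl]; exact (tsub_le_self.trans_lt (by simp)).ne) hmle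
    rw [hcompl] at h'
    have hball_le_one : μ (Metric.closedBall 0 M) ≤ 1 :=
      le_trans (measure_mono (Set.subset_univ _)) (le_of_eq measure_univ)
    have : (1 - μ (Metric.closedBall 0 M)).toReal
        = 1 - (μ (Metric.closedBall 0 M)).toReal := by
      rw [ENNReal.toReal_sub_of_le hball_le_one (by simp)]
      simp
    rw [this] at h'
    calc g K ≤ 1 - (μ (Metric.closedBall 0 M)).toReal := h'
      _ ≤ 5 / 8 := by linarith
  have hivt := intermediate_value_Icc' (by linarith : -K ≤ K) hgc.continuousOn
  have hmem : (5 / 8 : ℝ) ∈ Set.Icc (g K) (g (-K)) := ⟨hgpos, hgneg⟩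
  obtain ⟨d, hd, hgd⟩ := hivt hmem
  refine ⟨d, hd, ?_⟩
  rw [← ENNReal.ofReal_toReal (measure_ne_top μ {x | d ≤ dt b x})]
  have hh : (μ {x | d ≤ dt b x}).toReal = 5 / 8 := hgd
  rw [hh]

lemma exists_big_ball (μ : Measure (ℝ × ℝ)) [IsProbabilityMeasure μ] :
    ∃ M : ℝ, ENNReal.ofReal (5 / 8) < μ (Metric.closedBall 0 M) := by
  have hmono : Monotone (fun n : ℕ => Metric.closedBall (0 : ℝ × ℝ) n) := fun m n h =>
    Metric.closedBall_subset_closedBall (by exact_mod_cast h)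
  have hun : ⋃ n : ℕ, Metric.closedBall (0 : ℝ × ℝ) n = Set.univ := by
    ext x
    simp only [Set.mem_iUnion, Metric.mem_closedBall, dist_zero_right, Set.mem_univ, iff_true]
    obtain ⟨n, hn⟩ := exists_nat_ge ‖x‖
    exact ⟨n, hn⟩
  have ht := tendsto_measure_iUnion_atTop (μ := μ) hmono
  rw [hun, measure_univ] at ht
  have hlt : ENNReal.ofReal (5 / 8) < 1 := by
    rw [show (1 : ℝ≥0∞) = ENNReal.ofReal 1 by simp]
    exact ENNReal.ofReal_lt_ofReal_iff (by norm_num) |>.mpr (by norm_num)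
  obtain ⟨n, hn⟩ := (ht.eventually (eventually_gt_nhds hlt)).exists
  exact ⟨n, hn⟩

/-- Asymmetric ham-sandwich step: given a line bisecting the mass, there is a second line
cutting the two half-planes into pieces of measures `3/8, 1/8` and `1/4, 1/4`. -/
theorem asymmetric_ham_sandwich (μ : Measure (ℝ × ℝ)) (hμ : IsMass μ) (a : ℝ × ℝ)
    (c : ℝ) (ha : a ≠ 0)
    (h1 : μ {x : ℝ × ℝ | c ≤ a.1 * x.1 + a.2 * x.2} = ENNReal.ofReal (1 / 2))
    (h2 : μ {x : ℝ × ℝ | a.1 * x.1 + a.2 * x.2 ≤ c} = ENNReal.ofReal (1 / 2)) :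
    ∃ (b : ℝ × ℝ) (d : ℝ), b ≠ 0 ∧
      μ ({x : ℝ × ℝ | c ≤ a.1 * x.1 + a.2 * x.2} ∩
         {x : ℝ × ℝ | d ≤ b.1 * x.1 + b.2 * x.2}) = ENNReal.ofReal (3 / 8) ∧
      μ ({x : ℝ × ℝ | c ≤ a.1 * x.1 + a.2 * x.2} ∩
         {x : ℝ × ℝ | b.1 * x.1 + b.2 * x.2 ≤ d}) = ENNReal.ofReal (1 / 8) ∧
      μ ({x : ℝ × ℝ | a.1 * x.1 + a.2 * x.2 ≤ c} ∩
         {x : ℝ × ℝ | d ≤ b.1 * x.1 + b.2 * x.2}) = ENNReal.ofReal (1 / 4) ∧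
      μ ({x : ℝ × ℝ | a.1 * x.1 + a.2 * x.2 ≤ c} ∩
         {x : ℝ × ℝ | b.1 * x.1 + b.2 * x.2 ≤ d}) = ENNReal.ofReal (1 / 4) := by
  haveI := hμ.1
  -- Basic sets
  have h1' : μ {x : ℝ × ℝ | c ≤ dt a x} = ENNReal.ofReal (1 / 2) := h1
  have h2' : μ {x : ℝ × ℝ | dt a x ≤ c} = ENNReal.ofReal (1 / 2) := h2
  set Hp : Set (ℝ × ℝ) := {x | c ≤ dt a x} with hHp_def
  set Hm : Set (ℝ × ℝ) := {x | dt a x ≤ c} with hHm_def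
  have hHm : MeasurableSet Hm := measurableSet_le (continuous_dt a).measurable measurable_const
  have hHpmeas : MeasurableSet Hp := measurableSet_le measurable_const (continuous_dt a).measurable
  -- The rotating family
  set rot : ℝ → ℝ × ℝ := fun θ =>
    (Real.cos θ * a.1 - Real.sin θ * a.2, Real.sin θ * a.1 + Real.cos θ * a.2) with hrot_def
  have hrotc : Continuous rot := by
    apply Continuous.prodMk <;> fun_prop
  have hrot0 : rot 0 = a := by
    simp [hrot_def]
  have hrotpi : rot Real.pi = (-a.1, -a.2) := by
    simp [hrot_def]
  have hrotne : ∀ θ, rot θ ≠ 0 := by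
    intro θ hzero
    have h1c : Real.cos θ * a.1 - Real.sin θ * a.2 = 0 := by
      simpa using congrArg Prod.fst hzero
    have h2c : Real.sin θ * a.1 + Real.cos θ * a.2 = 0 := by
      simpa using congrArg Prod.snd hzero
    have hsum : a.1 ^ 2 + a.2 ^ 2 = 0 := by
      have hpyth := Real.sin_sq_add_cos_sq θ
      nlinarith [h1c, h2c]
    nlinarith [sq_sum_pos ha]
  set B : ℝ := |a.1| + |a.2| with hB_def
  have hB : 0 ≤ B := by positivity
  have hbound1 : ∀ θ, |(rot θ).1| ≤ B := by
    intro θ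
    have hc := Real.abs_cos_le_one θ
    have hs := Real.abs_sin_le_one θ
    calc |(rot θ).1| ≤ |Real.cos θ * a.1| + |Real.sin θ * a.2| := abs_sub _ _
      _ = |Real.cos θ| * |a.1| + |Real.sin θ| * |a.2| := by rw [abs_mul, abs_mul]
      _ ≤ B := by nlinarith [abs_nonneg a.1, abs_nonneg a.2]
  have hbound2 : ∀ θ, |(rot θ).2| ≤ B := by
    intro θ
    have hc := Real.abs_cos_le_one θ
    have hs := Real.abs_sin_le_one θ
    calc |(rot θ).2| ≤ |Real.sin θ * a.1| + |Real.cos θ * a.2| := abs_add_le _ _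
      _ = |Real.sin θ| * |a.1| + |Real.cos θ| * |a.2| := by rw [abs_mul, abs_mul]
      _ ≤ B := by nlinarith [abs_nonneg a.1, abs_nonneg a.2]
  obtain ⟨M, hM⟩ := exists_big_ball μ
  set K : ℝ := 2 * B * M + 1 with hK_def
  have hex : ∀ θ : ℝ, ∃ d ∈ Set.Icc (-K) K,
      μ {x | d ≤ dt (rot θ) x} = ENNReal.ofReal (5 / 8) := fun θ =>
    exists_cut μ hμ M B hB hM (rot θ) (hrotne θ) (hbound1 θ) (hbound2 θ)
  choose D hDmem hDeq using hex
  set h : ℝ → ℝ := fun θ => (μ (Hm ∩ {x | D θ ≤ dt (rot θ) x})).toReal with hh_def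
  -- continuity of h
  have hcont : Continuous h := by
    apply SeqContinuous.continuous
    intro u θ hu
    apply tendsto_of_subseq_tendsto
    intro ns hns
    obtain ⟨dstar, hdstar_mem, ms, hms_mono, hms_tend⟩ :=
      (isCompact_Icc (a := -K) (b := K)).tendsto_subseq (fun k => hDmem (u (ns k)))
    refine ⟨ms, ?_⟩
    have hutend : Tendsto (fun k => u (ns (ms k))) atTop (𝓝 θ) :=
      hu.comp (hns.comp hms_mono.tendsto_atTop)
    have hbtend : Tendsto (fun k => rot (u (ns (ms k)))) atTop (𝓝 (rot θ)) :=
      (hrotc.tendsto θ).comp hutend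
    have hline := mass_line hμ (hrotne θ) dstar
    have t1 := key_tendsto μ Set.univ MeasurableSet.univ _ _ hbtend _ _ hms_tend hline
    simp only [Set.univ_inter] at t1
    have t2 : Tendsto (fun k => μ {x | D (u (ns (ms k))) ≤ dt (rot (u (ns (ms k)))) x})
        atTop (𝓝 (ENNReal.ofReal (5 / 8))) := by
      simp only [hDeq]
      exact tendsto_const_nhds
    have h58 : μ {x | dstar ≤ dt (rot θ) x} = ENNReal.ofReal (5 / 8) :=
      tendsto_nhds_unique t1 t2
    have t3 := key_tendsto μ Hm hHm _ _ hbtend _ _ hms_tend hline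
    rw [measure_inter_congr μ Hm h58 (hDeq θ)] at t3
    exact (ENNReal.tendsto_toReal (measure_ne_top μ _)).comp t3
  -- endpoint θ = 0
  have hofRealhalf_lt : ENNReal.ofReal (1 / 2) < ENNReal.ofReal (5 / 8) :=
    (ENNReal.ofReal_lt_ofReal_iff (by norm_num)).mpr (by norm_num)
  have hD0le : D 0 ≤ c := by
    by_contra hlt
    push_neg at hlt
    have hsub : {x : ℝ × ℝ | D 0 ≤ dt (rot 0) x} ⊆ Hp := by
      rw [hrot0]
      intro x hx
      exact le_trans hlt.le hx
    have hm := measure_mono (μ := μ) hsub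
    rw [hDeq 0, h1'] at hm
    exact absurd hm (not_le.mpr hofRealhalf_lt)
  have h0val : μ (Hm ∩ {x | D 0 ≤ dt (rot 0) x}) = ENNReal.ofReal (1 / 8) := by
    set T : Set (ℝ × ℝ) := {x | D 0 ≤ dt (rot 0) x} with hT_def
    have hTmeas : MeasurableSet T := meas_half _ _
    have hHpsub : Hp ⊆ T := by
      rw [hT_def, hrot0]
      intro x hx
      exact le_trans hD0le hx
    have hunion : Hp ∪ (Hm ∩ T) = T := by
      apply Set.Subset.antisymm
      · rintro x (hx | hx)
        · exact hHpsub hx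
        · exact hx.2
      · intro x hx
        rcases le_total c (dt a x) with hcx | hcx
        · exact Or.inl hcx
        · exact Or.inr ⟨hcx, hx⟩
    have hnull : μ (Hp ∩ (Hm ∩ T)) = 0 := by
      apply measure_mono_null _ (mass_line hμ ha c)
      rintro x ⟨hx1, hx2, _⟩
      exact le_antisymm hx2 hx1
    have e := measure_union_add_inter (μ := μ) Hp (hHm.inter hTmeas)
    rw [hunion, hnull, add_zero, hDeq 0, h1'] at e
    have e' : ENNReal.ofReal (1 / 2) + ENNReal.ofReal (1 / 8)
        = ENNReal.ofReal (1 / 2) + μ (Hm ∩ T) := by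
      rw [← e, ← ENNReal.ofReal_add (by norm_num) (by norm_num)]
      norm_num
    exact ((ENNReal.add_right_inj (by simp)).mp e').symm
  have h0 : h 0 = 1 / 8 := by
    rw [hh_def]
    simp only [h0val]
    rw [ENNReal.toReal_ofReal (by norm_num)]
  -- endpoint θ = π
  have hnegdt : ∀ x : ℝ × ℝ, dt (rot Real.pi) x = -(dt a x) := by
    intro x
    rw [hrotpi]
    simp [dt]
    ring
  have hcle : c ≤ -(D Real.pi) := by
    by_contra hlt
    push_neg at hlt
    have hsub : {x : ℝ × ℝ | D Real.pi ≤ dt (rot Real.pi) x} ⊆ Hm := by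
      intro x hx
      have hx' : D Real.pi ≤ -(dt a x) := by rw [← hnegdt x]; exact hx
      have : dt a x ≤ -(D Real.pi) := by linarith
      exact le_trans this hlt.le
    have hm := measure_mono (μ := μ) hsub
    rw [hDeq Real.pi, h2'] at hm
    exact absurd hm (not_le.mpr hofRealhalf_lt)
  have hpival : μ (Hm ∩ {x | D Real.pi ≤ dt (rot Real.pi) x}) = ENNReal.ofReal (1 / 2) := by
    have hHmsub : Hm ⊆ {x | D Real.pi ≤ dt (rot Real.pi) x} := by
      intro x hx
      have : dt a x ≤ -(D Real.pi) := le_trans hx hcle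
      rw [Set.mem_setOf_eq, hnegdt x]
      linarith
    rw [Set.inter_eq_left.mpr hHmsub, h2']
  have hpi : h Real.pi = 1 / 2 := by
    rw [hh_def]
    simp only [hpival]
    rw [ENNReal.toReal_ofReal (by norm_num)]
  -- IVT
  have hivt := intermediate_value_Icc Real.pi_pos.le hcont.continuousOn
  have hmem : (1 / 4 : ℝ) ∈ Set.Icc (h 0) (h Real.pi) := by
    rw [h0, hpi]
    constructor <;> norm_num
  obtain ⟨ts, _, hts⟩ := hivt hmem
  -- final assembly
  set b : ℝ × ℝ := rot ts with hb_def
  set d : ℝ := D ts with hd_def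
  have hbne : b ≠ 0 := hrotne ts
  set Kp : Set (ℝ × ℝ) := {x | d ≤ dt b x} with hKp_def
  set Km : Set (ℝ × ℝ) := {x | dt b x ≤ d} with hKm_def
  have hKpmeas : MeasurableSet Kp := meas_half _ _
  have hKmmeas : MeasurableSet Km :=
    measurableSet_le (continuous_dt b).measurable measurable_const
  have f1 : μ (Hm ∩ Kp) = ENNReal.ofReal (1 / 4) := by
    have : (μ (Hm ∩ Kp)).toReal = 1 / 4 := hts
    rw [← ENNReal.ofReal_toReal (measure_ne_top μ (Hm ∩ Kp)), this]
  have f2 : μ Kp = ENNReal.ofReal (5 / 8) := hDeq ts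
  -- μ (Hp ∩ Kp) = 3/8
  have g1 : μ (Hp ∩ Kp) = ENNReal.ofReal (3 / 8) := by
    have hunion : (Hp ∩ Kp) ∪ (Hm ∩ Kp) = Kp := by
      apply Set.Subset.antisymm
      · rintro x (hx | hx) <;> exact hx.2
      · intro x hx
        rcases le_total c (dt a x) with hcx | hcx
        · exact Or.inl ⟨hcx, hx⟩
        · exact Or.inr ⟨hcx, hx⟩
    have hnull : μ ((Hp ∩ Kp) ∩ (Hm ∩ Kp)) = 0 := by
      apply measure_mono_null _ (mass_line hμ ha c)
      rintro x ⟨⟨hx1, _⟩, ⟨hx2, _⟩⟩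
      exact le_antisymm hx2 hx1
    have e := measure_union_add_inter (μ := μ) (Hp ∩ Kp) (hHm.inter hKpmeas)
    rw [hunion, hnull, add_zero, f1, f2] at e
    have e' : μ (Hp ∩ Kp) + ENNReal.ofReal (1 / 4)
        = ENNReal.ofReal (3 / 8) + ENNReal.ofReal (1 / 4) := by
      rw [← e, ← ENNReal.ofReal_add (by norm_num) (by norm_num)]
      norm_num
    exact (ENNReal.add_left_inj (by simp)).mp e'
  -- μ (Hp ∩ Km) = 1/8
  have g2 : μ (Hp ∩ Km) = ENNReal.ofReal (1 / 8) := by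
    have hunion : (Hp ∩ Kp) ∪ (Hp ∩ Km) = Hp := by
      apply Set.Subset.antisymm
      · rintro x (hx | hx) <;> exact hx.1
      · intro x hx
        rcases le_total d (dt b x) with hdx | hdx
        · exact Or.inl ⟨hx, hdx⟩
        · exact Or.inr ⟨hx, hdx⟩
    have hnull : μ ((Hp ∩ Kp) ∩ (Hp ∩ Km)) = 0 := by
      apply measure_mono_null _ (mass_line hμ hbne d)
      rintro x ⟨⟨_, hx1⟩, ⟨_, hx2⟩⟩
      exact le_antisymm hx2 hx1
    have e := measure_union_add_inter (μ := μ) (Hp ∩ Kp) (hHpmeas.inter hKmmeas)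
    rw [hunion, hnull, add_zero, h1', g1] at e
    have e' : ENNReal.ofReal (3 / 8) + ENNReal.ofReal (1 / 8)
        = ENNReal.ofReal (3 / 8) + μ (Hp ∩ Km) := by
      rw [← e, ← ENNReal.ofReal_add (by norm_num) (by norm_num)]
      norm_num
    exact ((ENNReal.add_right_inj (by simp)).mp e').symm
  -- μ (Hm ∩ Km) = 1/4
  have g3 : μ (Hm ∩ Km) = ENNReal.ofReal (1 / 4) := by
    have hunion : (Hm ∩ Kp) ∪ (Hm ∩ Km) = Hm := by
      apply Set.Subset.antisymm
      · rintro x (hx | hx) <;> exact hx.1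
      · intro x hx
        rcases le_total d (dt b x) with hdx | hdx
        · exact Or.inl ⟨hx, hdx⟩
        · exact Or.inr ⟨hx, hdx⟩
    have hnull : μ ((Hm ∩ Kp) ∩ (Hm ∩ Km)) = 0 := by
      apply measure_mono_null _ (mass_line hμ hbne d)
      rintro x ⟨⟨_, hx1⟩, ⟨_, hx2⟩⟩
      exact le_antisymm hx2 hx1
    have e := measure_union_add_inter (μ := μ) (Hm ∩ Kp) (hHm.inter hKmmeas)
    rw [hunion, hnull, add_zero, h2', f1] at e
    have e' : ENNReal.ofReal (1 / 4) + ENNReal.ofReal (1 / 4)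
        = ENNReal.ofReal (1 / 4) + μ (Hm ∩ Km) := by
      rw [← e, ← ENNReal.ofReal_add (by norm_num) (by norm_num)]
      norm_num
    exact ((ENNReal.add_right_inj (by simp)).mp e').symm
  exact ⟨b, d, hbne, g1, g2, f1, g3⟩
end
end
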